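/- arXiv:2505.06941 — 6 statements merged into one kernel-verified Lean document; each statement's English description precedes it below -/
import Mathlib

section
/- Let (p_n)_{n≥1} be a sequence of natural numbers and (a_n)_{n≥1} a sequence of rational numbers such that for every n ≥ 1 the coefficient of t^n in the inverse power series (1 − Σ_{m≥1} a_m t^m)^{−1} equals the coefficient of t^n in the finite product ∏_{d=1}^{n} (1 − t^d)^{−p_d} in ℚ[[t]]. Then for every n ≥ 1, a_n = Σ_{λ ⊢ n} (−1)^{ℓ(λ)−1} ∏_{d ≥ 1} C(p_d, m_d(λ)), where C(·,·) is the binomial coefficient and the sum runs over all partitions λ of n. -/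
open PowerSeries Finset

private lemma aux_coeff_expand (d q m : ℕ) (hd : d ≠ 0) :
    (PowerSeries.coeff m) ((1 - (PowerSeries.X : PowerSeries ℚ) ^ d) ^ q) =
      ∑ j ∈ Finset.range (q + 1),
        (if m = d * j then (-1 : ℚ) ^ j * (q.choose j : ℚ) else 0) := by
  have h1 : (1 - (PowerSeries.X : PowerSeries ℚ) ^ d) ^ q =
      ∑ j ∈ Finset.range (q + 1),
        PowerSeries.C ((-1 : ℚ) ^ j * (q.choose j : ℚ)) * PowerSeries.X ^ (d * j) := by
    rw [sub_eq_add_neg, add_comm, add_pow]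
    refine Finset.sum_congr rfl fun j hj => ?_
    have hc : (PowerSeries.C) ((-1 : ℚ) ^ j * (q.choose j : ℚ)) =
        (-1 : PowerSeries ℚ) ^ j * (q.choose j : PowerSeries ℚ) := by
      rw [map_mul, map_pow, map_neg, map_one, map_natCast]
    rw [one_pow, mul_one, neg_pow, pow_mul, hc]
    ring
  rw [h1, map_sum]
  refine Finset.sum_congr rfl fun j hj => ?_
  rw [coeff_C_mul, coeff_X_pow, mul_ite, mul_one, mul_zero]

private lemma aux_coeff_dvd (d q m : ℕ) (hd : d ≠ 0) (hdm : d ∣ m) :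
    (PowerSeries.coeff m) ((1 - (PowerSeries.X : PowerSeries ℚ) ^ d) ^ q) =
      (-1 : ℚ) ^ (m / d) * (q.choose (m / d) : ℚ) := by
  obtain ⟨k, rfl⟩ := hdm
  rw [aux_coeff_expand d q _ hd]
  have hk : (d * k) / d = k := Nat.mul_div_cancel_left k (Nat.pos_of_ne_zero hd)
  rw [hk]
  have : ∀ j ∈ Finset.range (q + 1),
      (if d * k = d * j then (-1 : ℚ) ^ j * (q.choose j : ℚ) else 0) =
      (if j = k then (-1 : ℚ) ^ k * (q.choose k : ℚ) else 0) := by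
    intro j hj
    by_cases h : j = k
    · subst h; simp
    · rw [if_neg, if_neg h]
      intro hh
      exact h (Nat.eq_of_mul_eq_mul_left (Nat.pos_of_ne_zero hd) hh).symm
  rw [Finset.sum_congr rfl this, Finset.sum_ite_eq' (Finset.range (q + 1))]
  by_cases hkq : k ∈ Finset.range (q + 1)
  · rw [if_pos hkq]
  · rw [if_neg hkq]
    have : q.choose k = 0 := Nat.choose_eq_zero_of_lt (by simpa using hkq)
    rw [this]; simp

private lemma aux_coeff_not_dvd (d q m : ℕ) (hd : d ≠ 0) (hdm : ¬ d ∣ m) :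
    (PowerSeries.coeff m) ((1 - (PowerSeries.X : PowerSeries ℚ) ^ d) ^ q) = 0 := by
  rw [aux_coeff_expand d q m hd]
  refine Finset.sum_eq_zero fun j hj => ?_
  rw [if_neg]
  intro hh
  exact hdm ⟨j, hh⟩

private lemma aux_const (d : ℕ) (hd : d ≠ 0) :
    PowerSeries.constantCoeff (1 - (PowerSeries.X : PowerSeries ℚ) ^ d) = 1 := by
  rw [map_sub, map_one, map_pow, PowerSeries.constantCoeff_X, zero_pow hd, sub_zero]

private lemma aux_inv_mul (d : ℕ) (hd : d ≠ 0) :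
    (1 - (PowerSeries.X : PowerSeries ℚ) ^ d)⁻¹ * (1 - (PowerSeries.X : PowerSeries ℚ) ^ d) = 1 :=
  PowerSeries.inv_mul_cancel _ (by rw [aux_const d hd]; norm_num)

private lemma aux_factor_sub_one (d q : ℕ) (hd : d ≠ 0) :
    (PowerSeries.X : PowerSeries ℚ) ^ d ∣ ((1 - (PowerSeries.X : PowerSeries ℚ) ^ d)⁻¹) ^ q - 1 := by
  have h1 : (PowerSeries.X : PowerSeries ℚ) ^ d ∣ (1 - (PowerSeries.X : PowerSeries ℚ) ^ d)⁻¹ - 1 := by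
    refine ⟨(1 - (PowerSeries.X : PowerSeries ℚ) ^ d)⁻¹, ?_⟩
    have := aux_inv_mul d hd
    linear_combination this
  calc (PowerSeries.X : PowerSeries ℚ) ^ d ∣ (1 - (PowerSeries.X : PowerSeries ℚ) ^ d)⁻¹ - 1 := h1
    _ ∣ ((1 - (PowerSeries.X : PowerSeries ℚ) ^ d)⁻¹) ^ q - 1 ^ q := sub_dvd_pow_sub_pow _ _ q
    _ = ((1 - (PowerSeries.X : PowerSeries ℚ) ^ d)⁻¹) ^ q - 1 := by rw [one_pow]

private lemma aux_prod_sub_one {R : Type*} [CommRing R] (x : R) (s : Finset ℕ) (f : ℕ → R)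
    (hf : ∀ d ∈ s, x ∣ f d - 1) : x ∣ (∏ d ∈ s, f d) - 1 := by
  classical
  induction s using Finset.induction with
  | empty => simp
  | @insert a s ha ih =>
    rw [Finset.prod_insert ha]
    have h1 : x ∣ f a - 1 := hf a (Finset.mem_insert_self a s)
    have h2 : x ∣ (∏ d ∈ s, f d) - 1 := ih fun d hd => hf d (Finset.mem_insert_of_mem hd)
    have : f a * ∏ d ∈ s, f d - 1 = f a * ((∏ d ∈ s, f d) - 1) + (f a - 1) := by ring
    rw [this]
    exact dvd_add (Dvd.dvd.mul_left h2 _) h1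

private lemma aux_Icc_eq_Ioc (m : ℕ) : Finset.Icc 1 m = Finset.Ioc 0 m := by
  ext x; simp; omega

private lemma aux_reduce (p : ℕ → ℕ) (a : ℕ → ℚ)
    (H : ∀ n : ℕ, 1 ≤ n →
      (PowerSeries.coeff n) ((PowerSeries.mk (fun k => if k = 0 then 1 else -a k))⁻¹) =
      (PowerSeries.coeff n)
        (∏ d ∈ Finset.Icc 1 n, ((1 - (PowerSeries.X : PowerSeries ℚ) ^ d)⁻¹) ^ p d))
    (n : ℕ) (hn : 1 ≤ n) :
    -a n = (PowerSeries.coeff n)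
      (∏ d ∈ Finset.Icc 1 n, (1 - (PowerSeries.X : PowerSeries ℚ) ^ d) ^ p d) := by
  set F : PowerSeries ℚ := PowerSeries.mk (fun k => if k = 0 then 1 else -a k) with hF
  set G : ℕ → PowerSeries ℚ :=
    fun N => ∏ d ∈ Finset.Icc 1 N, ((1 - (PowerSeries.X : PowerSeries ℚ) ^ d)⁻¹) ^ p d with hG
  set P : PowerSeries ℚ :=
    ∏ d ∈ Finset.Icc 1 n, (1 - (PowerSeries.X : PowerSeries ℚ) ^ d) ^ p d with hP
  have hFc : PowerSeries.constantCoeff F = 1 := by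
    rw [hF, PowerSeries.constantCoeff_mk]; simp
  have hFinv : F * F⁻¹ = 1 := PowerSeries.mul_inv_cancel _ (by rw [hFc]; norm_num)
  have hGP : G n * P = 1 := by
    rw [hG, hP, ← Finset.prod_mul_distrib]
    refine Finset.prod_eq_one fun d hd => ?_
    have hd1 : d ≠ 0 := by have := (Finset.mem_Icc.1 hd).1; omega
    rw [← mul_pow, aux_inv_mul d hd1, one_pow]
  have hGagree : ∀ k, 1 ≤ k → k ≤ n →
      (PowerSeries.coeff k) (G n) = (PowerSeries.coeff k) (G k) := by
    intro k hk1 hkn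
    have hsplit : G n = G k * ∏ d ∈ Finset.Ioc k n,
        ((1 - (PowerSeries.X : PowerSeries ℚ) ^ d)⁻¹) ^ p d := by
      simp only [hG]
      rw [aux_Icc_eq_Ioc n, aux_Icc_eq_Ioc k]
      exact (Finset.prod_Ioc_consecutive _ (Nat.zero_le k) hkn).symm
    have htail : (PowerSeries.X : PowerSeries ℚ) ^ (k + 1) ∣
        (∏ d ∈ Finset.Ioc k n, ((1 - (PowerSeries.X : PowerSeries ℚ) ^ d)⁻¹) ^ p d) - 1 := by
      refine aux_prod_sub_one _ _ _ fun d hd => ?_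
      have hd1 : k + 1 ≤ d := (Finset.mem_Ioc.1 hd).1
      exact dvd_trans (pow_dvd_pow _ hd1) (aux_factor_sub_one d (p d) (by omega))
    have hdiff : (PowerSeries.X : PowerSeries ℚ) ^ (k + 1) ∣ G n - G k := by
      have : G n - G k = G k *
          ((∏ d ∈ Finset.Ioc k n, ((1 - (PowerSeries.X : PowerSeries ℚ) ^ d)⁻¹) ^ p d) - 1) := by
        rw [hsplit]; ring
      rw [this]
      exact Dvd.dvd.mul_left htail _
    have := (PowerSeries.X_pow_dvd_iff.1 hdiff) k (Nat.lt_succ_self k)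
    rw [map_sub, sub_eq_zero] at this
    exact this
  have hagree : ∀ k, k ≤ n →
      (PowerSeries.coeff k) F⁻¹ = (PowerSeries.coeff k) (G n) := by
    intro k hkn
    rcases Nat.eq_zero_or_pos k with rfl | hk1
    · simp only [hG, PowerSeries.coeff_zero_eq_constantCoeff]
      rw [PowerSeries.constantCoeff_inv, hFc, inv_one, map_prod]
      refine (Finset.prod_eq_one fun d hd => ?_).symm
      have hd1 : d ≠ 0 := by have := (Finset.mem_Icc.1 hd).1; omega
      rw [map_pow, PowerSeries.constantCoeff_inv, aux_const d hd1, inv_one, one_pow]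
    · rw [H k hk1]
      exact (hGagree k hk1 hkn).symm
  have hdvd : (PowerSeries.X : PowerSeries ℚ) ^ (n + 1) ∣ F⁻¹ - G n :=
    PowerSeries.X_pow_dvd_iff.2 fun m hm => by
      rw [map_sub, hagree m (by omega), sub_self]
  have hFP : (PowerSeries.coeff n) F = (PowerSeries.coeff n) P := by
    have he : F - P = F * P * (G n - F⁻¹) := by
      linear_combination P * hFinv - F * hGP
    have hd2 : (PowerSeries.X : PowerSeries ℚ) ^ (n + 1) ∣ F - P := by
      rw [he]
      exact Dvd.dvd.mul_left (by rw [← neg_sub]; exact dvd_neg.2 hdvd) _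
    have := (PowerSeries.X_pow_dvd_iff.1 hd2) n (Nat.lt_succ_self n)
    rw [map_sub, sub_eq_zero] at this
    exact this
  rw [← hFP, hF, PowerSeries.coeff_mk, if_neg (by omega)]

private lemma aux_multiset_sum_sum (s : Finset ℕ) (f : ℕ → Multiset ℕ) :
    (∑ d ∈ s, f d).sum = ∑ d ∈ s, (f d).sum := by
  classical
  induction s using Finset.induction with
  | empty => simp
  | @insert a s ha ih =>
    rw [Finset.sum_insert ha, Finset.sum_insert ha, Multiset.sum_add, ih]

private lemma aux_toFinset_subset {n : ℕ} (μ : Nat.Partition n) :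
    μ.parts.toFinset ⊆ Finset.Icc 1 n := by
  intro d hd
  rw [Multiset.mem_toFinset] at hd
  exact Finset.mem_Icc.2 ⟨μ.parts_pos hd, (Multiset.le_sum_of_mem hd).trans_eq μ.parts_sum⟩

private noncomputable def auxL {n : ℕ} (μ : Nat.Partition n) : ℕ →₀ ℕ :=
  Finsupp.onFinset (Finset.Icc 1 n) (fun d => d * μ.parts.count d) (by
    intro d hd
    simp only [ne_eq, mul_eq_zero, not_or] at hd
    exact aux_toFinset_subset μ (Multiset.mem_toFinset.2 (Multiset.count_ne_zero.1 hd.2)))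

private lemma auxL_apply {n : ℕ} (μ : Nat.Partition n) (d : ℕ) :
    auxL μ d = d * μ.parts.count d := rfl

private lemma auxL_sum {n : ℕ} (μ : Nat.Partition n) :
    ∑ d ∈ Finset.Icc 1 n, d * μ.parts.count d = n := by
  rw [← Finset.sum_subset (aux_toFinset_subset μ) (fun x _ hx => by
    rw [Multiset.count_eq_zero_of_notMem (by simpa using hx), mul_zero])]
  have h1 := congrArg Multiset.sum (Multiset.toFinset_sum_count_nsmul_eq μ.parts)
  rw [aux_multiset_sum_sum] at h1
  calc ∑ d ∈ μ.parts.toFinset, d * μ.parts.count d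
      = ∑ d ∈ μ.parts.toFinset, (Multiset.count d μ.parts • ({d} : Multiset ℕ)).sum := by
        refine Finset.sum_congr rfl fun d _ => ?_
        rw [Multiset.nsmul_singleton, Multiset.sum_replicate, smul_eq_mul, mul_comm]
    _ = μ.parts.sum := h1
    _ = n := μ.parts_sum

private lemma aux_card_eq {n : ℕ} (μ : Nat.Partition n) :
    ∑ d ∈ Finset.Icc 1 n, μ.parts.count d = Multiset.card μ.parts := by
  rw [← Finset.sum_subset (aux_toFinset_subset μ) (fun x _ hx =>
    Multiset.count_eq_zero_of_notMem (by simpa using hx))]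
  exact Multiset.toFinset_sum_count_eq _

private lemma aux_comb (p : ℕ → ℕ) (n : ℕ) :
    (PowerSeries.coeff n)
      (∏ d ∈ Finset.Icc 1 n, (1 - (PowerSeries.X : PowerSeries ℚ) ^ d) ^ p d) =
    ∑ μ : Nat.Partition n,
      (-1 : ℚ) ^ (Multiset.card μ.parts) *
        ∏ d ∈ Finset.Icc 1 n, ((p d).choose (μ.parts.count d) : ℚ) := by
  classical
  have hvan : ∀ l ∈ Finset.finsuppAntidiag (Finset.Icc 1 n) n,
      (∏ d ∈ Finset.Icc 1 n,
        (PowerSeries.coeff (l d)) ((1 - (PowerSeries.X : PowerSeries ℚ) ^ d) ^ p d)) ≠ 0 →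
      ∀ d ∈ Finset.Icc 1 n, d ∣ l d := by
    intro l _ hne
    by_contra hcon
    push_neg at hcon
    obtain ⟨d, hd, hnd⟩ := hcon
    exact hne (Finset.prod_eq_zero hd
      (aux_coeff_not_dvd d (p d) (l d) (by have := (Finset.mem_Icc.1 hd).1; omega) hnd))
  rw [PowerSeries.coeff_prod, ← Finset.sum_filter_of_ne hvan]
  refine (Finset.sum_bij (fun (μ : Nat.Partition n) (_ : μ ∈ Finset.univ) => auxL μ)
    ?_ ?_ ?_ ?_).symm
  · -- membership
    intro μ _
    rw [Finset.mem_filter, Finset.mem_finsuppAntidiag]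
    refine ⟨⟨?_, Finsupp.support_onFinset_subset⟩, fun d hd => ⟨μ.parts.count d, rfl⟩⟩
    exact auxL_sum μ
  · -- injectivity
    intro μ _ ν _ h
    ext1
    ext d
    rcases Nat.eq_zero_or_pos d with rfl | hd0
    · rw [Multiset.count_eq_zero_of_notMem (fun hc => (μ.parts_pos hc).false),
        Multiset.count_eq_zero_of_notMem (fun hc => (ν.parts_pos hc).false)]
    · have := DFunLike.congr_fun h d
      rw [auxL_apply, auxL_apply] at this
      exact Nat.eq_of_mul_eq_mul_left hd0 this
  · -- surjectivity
    intro l hl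
    rw [Finset.mem_filter, Finset.mem_finsuppAntidiag] at hl
    obtain ⟨⟨hsum, hsupp⟩, hdvd⟩ := hl
    refine ⟨⟨∑ d ∈ Finset.Icc 1 n, Multiset.replicate (l d / d) d, ?_, ?_⟩,
      Finset.mem_univ _, ?_⟩
    · intro i hi
      rw [Multiset.mem_sum] at hi
      obtain ⟨d, hd, hid⟩ := hi
      rw [Multiset.eq_of_mem_replicate hid]
      exact (Finset.mem_Icc.1 hd).1
    · rw [aux_multiset_sum_sum]
      have hrepl : ∀ d ∈ Finset.Icc 1 n, (Multiset.replicate (l d / d) d).sum = l d :=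
        fun d hd => by rw [Multiset.sum_replicate, smul_eq_mul, Nat.div_mul_cancel (hdvd d hd)]
      rw [Finset.sum_congr rfl hrepl, hsum]
    · ext d
      rw [auxL_apply]
      simp only
      rw [Multiset.count_sum']
      have hcnt : ∀ e ∈ Finset.Icc 1 n,
          Multiset.count d (Multiset.replicate (l e / e) e) =
            if e = d then l e / e else 0 := fun e _ => Multiset.count_replicate _ _ _
      rw [Finset.sum_congr rfl hcnt, Finset.sum_ite_eq' (Finset.Icc 1 n)]
      by_cases hd : d ∈ Finset.Icc 1 n
      · rw [if_pos hd, Nat.mul_div_cancel' (hdvd d hd)]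
      · rw [if_neg hd, mul_zero]
        exact (Finsupp.notMem_support_iff.1 (fun hc => hd (hsupp hc))).symm
  · -- values
    intro μ _
    have hterm : ∀ d ∈ Finset.Icc 1 n,
        (PowerSeries.coeff (auxL μ d)) ((1 - (PowerSeries.X : PowerSeries ℚ) ^ d) ^ p d) =
        (-1 : ℚ) ^ (μ.parts.count d) * ((p d).choose (μ.parts.count d) : ℚ) := by
      intro d hd
      have hd0 : d ≠ 0 := by have := (Finset.mem_Icc.1 hd).1; omega
      rw [auxL_apply, aux_coeff_dvd d (p d) _ hd0 ⟨μ.parts.count d, rfl⟩,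
        Nat.mul_div_cancel_left _ (Nat.pos_of_ne_zero hd0)]
    rw [Finset.prod_congr rfl hterm, Finset.prod_mul_distrib,
      Finset.prod_pow_eq_pow_sum, aux_card_eq]

/-- If for every `n ≥ 1` the coefficient of `t^n` in
`(1 − Σ_{m≥1} a_m t^m)^{−1}` equals the coefficient of `t^n` in
`∏_{d=1}^{n} (1 − t^d)^{−p_d}` in `ℚ[[t]]`, then for every `n ≥ 1`,
`a n = Σ_{λ ⊢ n} (−1)^{ℓ(λ)−1} ∏_{d ≥ 1} C(p_d, m_d(λ))`. -/
theorem stmt_3 (p : ℕ → ℕ) (a : ℕ → ℚ)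
    (H : ∀ n : ℕ, 1 ≤ n →
      (PowerSeries.coeff n) ((PowerSeries.mk (fun k => if k = 0 then 1 else -a k))⁻¹) =
      (PowerSeries.coeff n)
        (∏ d ∈ Finset.Icc 1 n, ((1 - (PowerSeries.X : PowerSeries ℚ) ^ d)⁻¹) ^ p d)) :
    ∀ n : ℕ, 1 ≤ n →
      a n = ∑ μ : Nat.Partition n,
        (-1 : ℚ) ^ (Multiset.card μ.parts - 1) *
          ∏ d ∈ Finset.Icc 1 n, (Nat.choose (p d) (μ.parts.count d) : ℚ) := by
  intro n hn
  have h1 := aux_reduce p a H n hn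
  rw [aux_comb p n] at h1
  have hcard : ∀ μ : Nat.Partition n, 1 ≤ Multiset.card μ.parts := by
    intro μ
    by_contra hc
    have h0 : μ.parts = 0 := Multiset.card_eq_zero.1 (by omega)
    have hs := μ.parts_sum
    rw [h0, Multiset.sum_zero] at hs
    omega
  have key : ∑ μ : Nat.Partition n,
      (-1 : ℚ) ^ (Multiset.card μ.parts - 1) *
        ∏ d ∈ Finset.Icc 1 n, (Nat.choose (p d) (μ.parts.count d) : ℚ)
      = -∑ μ : Nat.Partition n,
      (-1 : ℚ) ^ (Multiset.card μ.parts) *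
        ∏ d ∈ Finset.Icc 1 n, (Nat.choose (p d) (μ.parts.count d) : ℚ) := by
    rw [← Finset.sum_neg_distrib]
    refine Finset.sum_congr rfl fun μ _ => ?_
    have hc := hcard μ
    have he : Multiset.card μ.parts = (Multiset.card μ.parts - 1) + 1 := by omega
    have hx : (-1 : ℚ) ^ (Multiset.card μ.parts) =
        (-1 : ℚ) ^ (Multiset.card μ.parts - 1) * (-1) := by
      conv_lhs => rw [he]
      rw [pow_succ]
    rw [hx]
    ring
  linarith [h1, key]
end

section
/- Let (p_n)_{n≥1} be a sequence of integers and (a_n)_{n≥1} a sequence of rational numbers such that for every n ≥ 1 the coefficient of t^n in the inverse power series (1 − Σ_{m≥1} a_m t^m)^{−1} equals the coefficient of t^n in the finite product ∏_{d=1}^{n} (1 − t^d)^{−p_d} in ℚ[[t]], where (1 − t^d)^{−p_d} denotes the (−p_d)-th power of the unit 1 − t^d. Then for every n ≥ 1, p_n = (1/n) · Σ_{d | n} d · μ(n/d) · Σ_{β ⊨ d} a_β / ℓ(β), where the inner sum runs over all compositions β of d, as an equality of rational numbers. -/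
open PowerSeries

/-- The unit `1 - t^(d+1)` of `ℚ[[t]]`. -/
noncomputable def oneSubXPowUnit (d : ℕ) : (PowerSeries ℚ)ˣ :=
  Units.mkOfMulEqOne (1 - (PowerSeries.X : PowerSeries ℚ) ^ (d + 1))
    ((1 - (PowerSeries.X : PowerSeries ℚ) ^ (d + 1))⁻¹)
    (PowerSeries.mul_inv_cancel _ (by
      simp [map_sub, map_pow, PowerSeries.constantCoeff_X]))

namespace Stmt4Aux

open Finset

noncomputable def S (a : ℕ → ℚ) : PowerSeries ℚ := PowerSeries.mk fun k => if k = 0 then 0 else a k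

lemma constantCoeff_S (a : ℕ → ℚ) : constantCoeff (R := ℚ) (S a) = 0 := by
  simp [S, ← coeff_zero_eq_constantCoeff]

lemma one_sub_S (a : ℕ → ℚ) :
    (1 : PowerSeries ℚ) - S a = PowerSeries.mk (fun k => if k = 0 then 1 else -a k) := by
  ext n
  rcases n with _ | n <;> simp [S, coeff_one]

lemma coeff_S (a : ℕ → ℚ) (k : ℕ) : coeff (R := ℚ) k (S a) = if k = 0 then 0 else a k := by
  simp [S]

lemma sum_range_getD (L : List ℕ) : ∑ i ∈ Finset.range L.length, L.getD i 0 = L.sum := by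
  induction L with
  | nil => simp
  | cons x xs ih =>
      rw [List.length_cons, Finset.sum_range_succ']
      simp only [List.getD_cons_succ, List.getD_cons_zero, List.sum_cons]
      omega

lemma coeff_S_pow (a : ℕ → ℚ) (n k : ℕ) :
    coeff (R := ℚ) n (S a ^ k) =
      ∑ β ∈ Finset.univ.filter (fun β : Composition n => β.length = k),
        (β.blocks.map a).prod := by
  classical
  rw [coeff_pow]
  rw [← Finset.sum_filter_of_ne (p := fun l : ℕ →₀ ℕ => ∀ i ∈ range k, l i ≠ 0)
    (by
      intro l _ hl i hi hli
      exact hl (Finset.prod_eq_zero hi (by rw [coeff_S, if_pos hli])))]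
  refine Finset.sum_bij'
    (fun l hl => (⟨(List.range k).map (fun i => l i), ?_, ?_⟩ : Composition n))
    (fun β hβ => Finsupp.onFinset (range k) (fun i => β.blocks.getD i 0) ?_)
    ?_ ?_ ?_ ?_ ?_
  · -- blocks positive
    intro i hi
    rw [List.mem_map] at hi
    obtain ⟨j, hj, rfl⟩ := hi
    rw [Finset.mem_filter, Finset.mem_finsuppAntidiag] at hl
    exact Nat.pos_of_ne_zero (hl.2 j (by simpa using hj))
  · -- blocks sum
    rw [Finset.mem_filter, Finset.mem_finsuppAntidiag] at hl
    have : ((List.range k).map (fun i => l i)).sum = ∑ i ∈ range k, l i := rfl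
    rw [this, hl.1.1]
  · -- onFinset support condition
    intro i hi
    rw [Finset.mem_filter] at hβ
    rw [Finset.mem_range, ← hβ.2]
    by_contra hik
    push_neg at hik
    exact hi (List.getD_eq_default _ _ (by simpa [Composition.length] using hik))
  · -- forward mem
    intro l hl
    rw [Finset.mem_filter]
    constructor
    · exact Finset.mem_univ _
    · simp [Composition.length]
  · -- backward mem
    intro β hβ
    rw [Finset.mem_filter] at hβ ⊢
    rw [Finset.mem_finsuppAntidiag]
    refine ⟨⟨?_, Finsupp.support_onFinset_subset⟩, ?_⟩
    · rw [Finset.sum_congr rfl (fun i hi => Finsupp.onFinset_apply)]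
      have hlen : β.blocks.length = k := hβ.2
      calc ∑ i ∈ range k, β.blocks.getD i 0
          = ∑ i ∈ range β.blocks.length, β.blocks.getD i 0 := by rw [hlen]
        _ = β.blocks.sum := sum_range_getD β.blocks
        _ = n := β.blocks_sum
    · intro i hi
      rw [Finsupp.onFinset_apply]
      rw [Finset.mem_range] at hi
      have hi' : i < β.blocks.length := by
        have := hβ.2; unfold Composition.length at this; omega
      rw [List.getD_eq_getElem _ _ hi']
      exact Nat.pos_of_ne_zero (by exact (Composition.blocks_pos β (List.getElem_mem _)).ne') |>.ne'
  · -- left inverse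
    intro l hl
    rw [Finset.mem_filter, Finset.mem_finsuppAntidiag] at hl
    ext i
    rw [Finsupp.onFinset_apply]
    by_cases hik : i < k
    · rw [List.getD_eq_getElem _ _ (by simpa using hik)]
      simp
    · rw [List.getD_eq_default _ _ (by simpa using hik)]
      by_contra h
      have := hl.1.2 (Finsupp.mem_support_iff.mpr (fun hh => h hh.symm))
      rw [Finset.mem_range] at this
      exact hik this
  · -- right inverse
    intro β hβ
    rw [Finset.mem_filter] at hβ
    apply Composition.ext
    apply List.ext_getElem
    · simpa [Composition.length] using hβ.2.symm
    · intro i hi1 hi2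
      simp only [List.getElem_map, List.getElem_range]
      rw [Finsupp.onFinset_apply, List.getD_eq_getElem _ _ hi2]
  · -- values
    intro l hl
    rw [Finset.mem_filter, Finset.mem_finsuppAntidiag] at hl
    rw [List.map_map]
    have : ((List.range k).map (a ∘ fun i => l i)).prod = ∏ i ∈ range k, a (l i) := rfl
    rw [this]
    apply Finset.prod_congr rfl
    intro i hi
    rw [coeff_S, if_neg (hl.2 i hi)]

noncomputable def T (a : ℕ → ℚ) (n : ℕ) : PowerSeries ℚ :=
  ∑ k ∈ Finset.range (n + 1), ((k : ℚ)⁻¹) • S a ^ k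

lemma coeff_T (a : ℕ → ℚ) (n : ℕ) :
    coeff (R := ℚ) n (T a n) = ∑ β : Composition n, (β.blocks.map a).prod / (β.length : ℚ) := by
  classical
  rw [T, map_sum]
  simp only [LinearMap.map_smul, coeff_S_pow, smul_eq_mul, Finset.mul_sum]
  rw [← Finset.sum_fiberwise_of_maps_to (g := fun β : Composition n => β.length)
    (t := Finset.range (n+1)) (fun β _ => Finset.mem_range.mpr (Nat.lt_succ_of_le β.length_le))]
  apply Finset.sum_congr rfl
  intro k _
  apply Finset.sum_congr rfl
  intro β hβ
  rw [Finset.mem_filter] at hβ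
  rw [hβ.2, div_eq_inv_mul]

lemma deriv_T (a : ℕ → ℚ) (n : ℕ) :
    d⁄dX ℚ (T a n) = (∑ k ∈ Finset.range n, S a ^ k) * d⁄dX ℚ (S a) := by
  rw [T, map_sum, Finset.sum_range_succ']
  have h0 : (((0:ℕ):ℚ)⁻¹) • S a ^ 0 = 0 := by simp
  rw [h0, map_zero, add_zero]
  rw [Finset.sum_mul]
  apply Finset.sum_congr rfl
  intro k _
  rw [Derivation.map_smul, Derivation.leibniz_pow]
  simp only [Nat.add_sub_cancel, smul_eq_mul]
  rw [← Nat.cast_smul_eq_nsmul ℚ, smul_smul]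
  rw [inv_mul_cancel₀ (by positivity : (((k+1:ℕ)):ℚ) ≠ 0), one_smul]

lemma val_oneSubXPowUnit (d : ℕ) :
    (oneSubXPowUnit d : PowerSeries ℚ) = 1 - (PowerSeries.X) ^ (d + 1) := rfl

/-- the inverse of `1 - X^m` -/
noncomputable def invS (m : ℕ) : PowerSeries ℚ := PowerSeries.mk fun j => if m ∣ j then 1 else 0

lemma one_sub_mul_invS (m : ℕ) (hm : 1 ≤ m) :
    (1 - (X : PowerSeries ℚ) ^ m) * invS m = 1 := by
  ext j
  rw [sub_mul, one_mul, map_sub]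
  rw [mul_comm, coeff_mul_X_pow']
  rcases Nat.eq_zero_or_pos j with rfl | hj
  · simp [invS, Nat.not_succ_le_zero, hm]
    intro h; omega
  · rw [coeff_one, if_neg hj.ne']
    simp only [invS, coeff_mk]
    by_cases hmj : m ≤ j
    · rw [if_pos hmj]
      have : m ∣ j ↔ m ∣ j - m := by
        constructor
        · intro h; exact (Nat.dvd_sub h dvd_rfl)
        · intro h; have := Nat.dvd_add h (dvd_refl m); rwa [Nat.sub_add_cancel hmj] at this
      rcases em (m ∣ j) with h | h
      · rw [if_pos h, if_pos (this.mp h), sub_self]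
      · rw [if_neg h, if_neg (fun hh => h (this.mpr hh)), sub_self]
    · rw [if_neg hmj, sub_zero, if_neg]
      intro h
      exact hmj (Nat.le_of_dvd hj h)

lemma inv_oneSubXPowUnit (d : ℕ) :
    (((oneSubXPowUnit d)⁻¹ : (PowerSeries ℚ)ˣ) : PowerSeries ℚ) = invS (d+1) := by
  apply Units.inv_eq_of_mul_eq_one_right
  rw [val_oneSubXPowUnit]
  exact one_sub_mul_invS (d+1) (Nat.succ_le_succ (Nat.zero_le d))

/-- logarithmic derivative as a monoid hom into the multiplicativization -/
noncomputable def LD : (PowerSeries ℚ)ˣ →* Multiplicative (PowerSeries ℚ) where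
  toFun u := Multiplicative.ofAdd
    (d⁄dX ℚ (u : PowerSeries ℚ) * ((u⁻¹ : (PowerSeries ℚ)ˣ) : PowerSeries ℚ))
  map_one' := by simp
  map_mul' u v := by
    show Multiplicative.ofAdd _ = Multiplicative.ofAdd _ * Multiplicative.ofAdd _
    rw [← ofAdd_add]
    congr 1
    have hu : (u : PowerSeries ℚ) * ((u⁻¹ : (PowerSeries ℚ)ˣ) : PowerSeries ℚ) = 1 := u.mul_inv
    have hv : (v : PowerSeries ℚ) * ((v⁻¹ : (PowerSeries ℚ)ˣ) : PowerSeries ℚ) = 1 := v.mul_inv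
    rw [Units.val_mul, mul_inv_rev, Units.val_mul, Derivation.leibniz]
    simp only [smul_eq_mul]
    linear_combination (d⁄dX ℚ (v : PowerSeries ℚ) * ((v⁻¹ : (PowerSeries ℚ)ˣ) : PowerSeries ℚ)) * hu +
      (d⁄dX ℚ (u : PowerSeries ℚ) * ((u⁻¹ : (PowerSeries ℚ)ˣ) : PowerSeries ℚ)) * hv

lemma LD_apply (u : (PowerSeries ℚ)ˣ) :
    Multiplicative.toAdd (LD u) =
      d⁄dX ℚ (u : PowerSeries ℚ) * ((u⁻¹ : (PowerSeries ℚ)ˣ) : PowerSeries ℚ) := rfl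

lemma map_prod_zpow_eq_one {A : Type*} [CommRing A] (φ : PowerSeries ℚ →+* A)
    (s : Finset ℕ) (u : ℕ → (PowerSeries ℚ)ˣ) (z : ℕ → ℤ)
    (h : ∀ d ∈ s, φ (u d : PowerSeries ℚ) = 1) :
    φ ((∏ d ∈ s, u d ^ z d : (PowerSeries ℚ)ˣ) : PowerSeries ℚ) = 1 := by
  have h1 : Units.map φ.toMonoidHom (∏ d ∈ s, u d ^ z d) = 1 := by
    rw [map_prod]
    apply Finset.prod_eq_one
    intro d hd
    rw [map_zpow]
    have : Units.map φ.toMonoidHom (u d) = 1 := Units.ext (by simpa using h d hd)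
    rw [this, one_zpow]
  have := congrArg (Units.val) h1
  rwa [Units.coe_map, Units.val_one] at this

lemma constantCoeff_prod (p : ℕ → ℤ) (n : ℕ) :
    constantCoeff (R := ℚ) ((∏ d ∈ Finset.range n, (oneSubXPowUnit d) ^ (-(p (d + 1))) :
      (PowerSeries ℚ)ˣ) : PowerSeries ℚ) = 1 := by
  apply map_prod_zpow_eq_one
  intro d _
  rw [val_oneSubXPowUnit]
  simp

lemma prod_stable (p : ℕ → ℤ) {m n : ℕ} (hmn : m ≤ n) :
    (X : PowerSeries ℚ) ^ (m + 1) ∣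
      ((∏ d ∈ Finset.range n, (oneSubXPowUnit d) ^ (-(p (d + 1))) : (PowerSeries ℚ)ˣ) : PowerSeries ℚ)
      - ((∏ d ∈ Finset.range m, (oneSubXPowUnit d) ^ (-(p (d + 1))) : (PowerSeries ℚ)ˣ) : PowerSeries ℚ) := by
  set I := Ideal.span {(X : PowerSeries ℚ) ^ (m + 1)} with hI
  rw [← Ideal.mem_span_singleton, ← hI, ← Ideal.Quotient.eq]
  rw [← Finset.prod_range_mul_prod_Ico _ hmn, Units.val_mul, map_mul]
  have h1 : Ideal.Quotient.mk I
      ((∏ d ∈ Finset.Ico m n, (oneSubXPowUnit d) ^ (-(p (d + 1))) : (PowerSeries ℚ)ˣ) : PowerSeries ℚ) = 1 := by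
    apply map_prod_zpow_eq_one
    intro d hd
    rw [Finset.mem_Ico] at hd
    rw [val_oneSubXPowUnit]
    have : ((1 : PowerSeries ℚ) - X ^ (d+1)) - 1 ∈ I := by
      rw [hI, Ideal.mem_span_singleton]
      rw [sub_sub_cancel_left, dvd_neg]
      exact pow_dvd_pow _ (by omega)
    have := (Ideal.Quotient.eq (I := I)).mpr this
    rwa [map_one] at this
  rw [mul_comm, h1, one_mul]

lemma coeff_eq_of_dvd {f g : PowerSeries ℚ} {k m : ℕ} (hmk : m < k)
    (hdvd : (X : PowerSeries ℚ) ^ k ∣ f - g) : coeff (R := ℚ) m f = coeff (R := ℚ) m g := by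
  have := PowerSeries.X_pow_dvd_iff.mp hdvd m hmk
  rw [map_sub, sub_eq_zero] at this
  exact this

lemma keyA (p : ℕ → ℤ) (a : ℕ → ℚ)
    (H : ∀ n : ℕ, 1 ≤ n →
      (PowerSeries.coeff (R := ℚ) n) ((PowerSeries.mk (fun k => if k = 0 then 1 else -a k))⁻¹) =
      (PowerSeries.coeff (R := ℚ) n)
        ((↑(∏ d ∈ Finset.range n, (oneSubXPowUnit d) ^ (-(p (d + 1)))) : PowerSeries ℚ)))
    (n : ℕ) (hn : 1 ≤ n) :
    (n : ℚ) * (∑ β : Composition n, (β.blocks.map a).prod / (β.length : ℚ)) =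
      ∑ e ∈ n.divisors, (e : ℚ) * (p e : ℚ) := by
  classical
  obtain ⟨N, rfl⟩ : ∃ N, n = N + 1 := ⟨n - 1, by omega⟩
  set F : PowerSeries ℚ := (PowerSeries.mk (fun k => if k = 0 then 1 else -a k))⁻¹ with hF
  set Gu : (PowerSeries ℚ)ˣ :=
    ∏ d ∈ Finset.range (N+1), (oneSubXPowUnit d) ^ (-(p (d + 1))) with hGu
  set G : PowerSeries ℚ := (Gu : PowerSeries ℚ) with hG
  have hccmk : constantCoeff (R := ℚ) (PowerSeries.mk (fun k => if k = 0 then 1 else -a k)) = 1 := by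
    rw [← coeff_zero_eq_constantCoeff]
    simp
  have hFmul : ((1 : PowerSeries ℚ) - S a) * F = 1 := by
    rw [one_sub_S, hF]
    exact PowerSeries.mul_inv_cancel _ (by rw [hccmk]; norm_num)
  have hGmul : ((Gu⁻¹ : (PowerSeries ℚ)ˣ) : PowerSeries ℚ) * G = 1 := by
    rw [hG, ← Units.val_mul, inv_mul_cancel, Units.val_one]
  -- coefficient matching of F and G up to degree N+1
  have hmatch : ∀ m, m ≤ N + 1 → coeff (R := ℚ) m F = coeff (R := ℚ) m G := by
    intro m hm
    rcases m with _ | m'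
    · have h1 : constantCoeff (R := ℚ) F = constantCoeff (R := ℚ) G := by
        rw [hF, PowerSeries.constantCoeff_inv, hccmk, inv_one, hG, hGu, constantCoeff_prod]
      simpa [coeff_zero_eq_constantCoeff] using h1
    · rw [H (m'+1) (Nat.succ_le_succ (Nat.zero_le _))]
      exact (coeff_eq_of_dvd (by omega) (prod_stable p (by omega))).symm
  have hdvdFG : (X : PowerSeries ℚ) ^ (N + 2) ∣ F - G := by
    rw [PowerSeries.X_pow_dvd_iff]
    intro m hm
    rw [map_sub, hmatch m (by omega), sub_self]
  have hinvmatch : (X : PowerSeries ℚ) ^ (N + 2) ∣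
      ((1 : PowerSeries ℚ) - S a) - ((Gu⁻¹ : (PowerSeries ℚ)ˣ) : PowerSeries ℚ) := by
    have key : ((1 : PowerSeries ℚ) - S a) - ((Gu⁻¹ : (PowerSeries ℚ)ˣ) : PowerSeries ℚ)
        = (((1 : PowerSeries ℚ) - S a) * ((Gu⁻¹ : (PowerSeries ℚ)ˣ) : PowerSeries ℚ)) * (G - F) := by
      linear_combination ((Gu⁻¹ : (PowerSeries ℚ)ˣ) : PowerSeries ℚ) * hFmul
        - ((1 : PowerSeries ℚ) - S a) * hGmul
    rw [key]
    exact Dvd.dvd.mul_left ((dvd_sub_comm).mp hdvdFG) _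
  -- the chain of coefficient identities
  have e1 : (((N+1:ℕ)) : ℚ) * (∑ β : Composition (N+1), (β.blocks.map a).prod / (β.length : ℚ))
      = coeff (R := ℚ) N (d⁄dX ℚ (T a (N+1))) := by
    rw [coeff_derivative, coeff_T]
    push_cast
    ring
  have hgeom : (∑ k ∈ Finset.range (N+1), S a ^ k) * (1 - S a) = 1 - S a ^ (N+1) := by
    have h := geom_sum_mul (S a) (N+1)
    linear_combination -h
  have hsum : (∑ k ∈ Finset.range (N+1), S a ^ k) = (1 - S a ^ (N+1)) * F := by
    calc (∑ k ∈ Finset.range (N+1), S a ^ k)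
        = (∑ k ∈ Finset.range (N+1), S a ^ k) * (((1 : PowerSeries ℚ) - S a) * F) := by
          rw [hFmul, mul_one]
      _ = ((∑ k ∈ Finset.range (N+1), S a ^ k) * ((1 : PowerSeries ℚ) - S a)) * F := by ring
      _ = (1 - S a ^ (N+1)) * F := by rw [hgeom]
  have e3 : coeff (R := ℚ) N (d⁄dX ℚ (T a (N+1))) = coeff (R := ℚ) N (F * d⁄dX ℚ (S a)) := by
    rw [deriv_T, hsum]
    have hsplit : (1 - S a ^ (N+1)) * F * d⁄dX ℚ (S a)
        = F * d⁄dX ℚ (S a) - S a ^ (N+1) * (F * d⁄dX ℚ (S a)) := by ring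
    rw [hsplit, map_sub]
    have hvan : coeff (R := ℚ) N (S a ^ (N+1) * (F * d⁄dX ℚ (S a))) = 0 := by
      have hXS : (X : PowerSeries ℚ) ∣ S a := PowerSeries.X_dvd_iff.mpr (constantCoeff_S a)
      have hd : (X : PowerSeries ℚ) ^ (N+1) ∣ S a ^ (N+1) * (F * d⁄dX ℚ (S a)) :=
        Dvd.dvd.mul_right (pow_dvd_pow_of_dvd hXS _) _
      exact PowerSeries.X_pow_dvd_iff.mp hd N (Nat.lt_succ_self N)
    rw [hvan, sub_zero]
  have e4 : F * d⁄dX ℚ (S a) = d⁄dX ℚ F * ((1 : PowerSeries ℚ) - S a) := by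
    have hD : d⁄dX ℚ (((1 : PowerSeries ℚ) - S a) * F) = 0 := by
      rw [hFmul, Derivation.map_one_eq_zero]
    rw [Derivation.leibniz] at hD
    simp only [smul_eq_mul, map_sub, Derivation.map_one_eq_zero, zero_sub, mul_neg] at hD
    linear_combination -hD
  have e5 : coeff (R := ℚ) N (d⁄dX ℚ F * ((1 : PowerSeries ℚ) - S a))
      = coeff (R := ℚ) N (d⁄dX ℚ G * ((Gu⁻¹ : (PowerSeries ℚ)ˣ) : PowerSeries ℚ)) := by
    rw [PowerSeries.coeff_mul, PowerSeries.coeff_mul]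
    apply Finset.sum_congr rfl
    intro ij hij
    rw [Finset.HasAntidiagonal.mem_antidiagonal] at hij
    have h1 : coeff (R := ℚ) ij.1 (d⁄dX ℚ F) = coeff (R := ℚ) ij.1 (d⁄dX ℚ G) := by
      rw [coeff_derivative, coeff_derivative, hmatch (ij.1+1) (by omega)]
    have h2 : coeff (R := ℚ) ij.2 ((1 : PowerSeries ℚ) - S a)
        = coeff (R := ℚ) ij.2 ((Gu⁻¹ : (PowerSeries ℚ)ˣ) : PowerSeries ℚ) :=
      coeff_eq_of_dvd (by omega) hinvmatch
    rw [h1, h2]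
  have e7 : d⁄dX ℚ G * ((Gu⁻¹ : (PowerSeries ℚ)ˣ) : PowerSeries ℚ)
      = ∑ d ∈ Finset.range (N+1), (-(p (d+1))) •
          (d⁄dX ℚ ((oneSubXPowUnit d : (PowerSeries ℚ)ˣ) : PowerSeries ℚ) *
            (((oneSubXPowUnit d)⁻¹ : (PowerSeries ℚ)ˣ) : PowerSeries ℚ)) := by
    rw [← LD_apply, hGu, map_prod, toAdd_prod]
    apply Finset.sum_congr rfl
    intro d _
    rw [map_zpow, toAdd_zpow, LD_apply]
  have e8 : ∀ d ∈ Finset.range (N+1),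
      coeff (R := ℚ) N ((-(p (d+1))) •
          (d⁄dX ℚ ((oneSubXPowUnit d : (PowerSeries ℚ)ˣ) : PowerSeries ℚ) *
            (((oneSubXPowUnit d)⁻¹ : (PowerSeries ℚ)ˣ) : PowerSeries ℚ)))
        = if (d+1) ∣ (N+1) then ((d+1 : ℕ) : ℚ) * ((p (d+1) : ℤ) : ℚ) else 0 := by
    intro d hd
    rw [Finset.mem_range] at hd
    have hder : d⁄dX ℚ ((oneSubXPowUnit d : (PowerSeries ℚ)ˣ) : PowerSeries ℚ)
        = -((d+1 : ℕ) • ((X : PowerSeries ℚ) ^ d)) := by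
      rw [val_oneSubXPowUnit, map_sub, Derivation.map_one_eq_zero, zero_sub]
      rw [Derivation.leibniz_pow]
      simp only [Nat.add_sub_cancel, derivative_X, smul_eq_mul, mul_one]
    rw [hder, inv_oneSubXPowUnit, neg_mul, smul_mul_assoc]
    rw [map_zsmul, map_neg, map_nsmul]
    have hXN : coeff (R := ℚ) N ((X : PowerSeries ℚ) ^ d * invS (d+1))
        = if (d+1) ∣ (N+1) then 1 else 0 := by
      have hrw : N = (N - d) + d := by omega
      conv_lhs => rw [hrw, PowerSeries.coeff_X_pow_mul]
      rw [invS, coeff_mk]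
      have hiff : (d+1) ∣ (N - d) ↔ (d+1) ∣ (N + 1) := by
        constructor
        · intro h
          have := Nat.dvd_add h (dvd_refl (d+1))
          have heq : N - d + (d + 1) = N + 1 := by omega
          rwa [heq] at this
        · intro h
          have := Nat.dvd_sub h (dvd_refl (d+1))
          have heq : N + 1 - (d + 1) = N - d := by omega
          rwa [heq] at this
      by_cases h : (d+1) ∣ (N+1)
      · rw [if_pos (hiff.mpr h), if_pos h]
      · rw [if_neg (fun hh => h (hiff.mp hh)), if_neg h]
    rw [hXN]
    by_cases h : (d+1) ∣ (N+1)
    · rw [if_pos h, if_pos h, smul_neg, neg_zsmul, neg_neg, nsmul_eq_mul, mul_one,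
        zsmul_eq_mul]
      push_cast
      ring
    · rw [if_neg h, if_neg h]
      simp
  have e9 : ∑ d ∈ Finset.range (N+1),
      (if (d+1) ∣ (N+1) then ((d+1 : ℕ) : ℚ) * ((p (d+1) : ℤ) : ℚ) else 0)
      = ∑ e ∈ (N+1).divisors, (e : ℚ) * (p e : ℚ) := by
    rw [Nat.divisors, Finset.sum_filter]
    rw [Finset.sum_Ico_eq_sum_range]
    have : N + 1 + 1 - 1 = N + 1 := by omega
    rw [this]
    apply Finset.sum_congr rfl
    intro d _
    have h1d : 1 + d = d + 1 := by omega
    rw [h1d]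
  calc (((N+1:ℕ)) : ℚ) * (∑ β : Composition (N+1), (β.blocks.map a).prod / (β.length : ℚ))
      = coeff (R := ℚ) N (d⁄dX ℚ (T a (N+1))) := e1
    _ = coeff (R := ℚ) N (F * d⁄dX ℚ (S a)) := e3
    _ = coeff (R := ℚ) N (d⁄dX ℚ F * ((1 : PowerSeries ℚ) - S a)) := by rw [e4]
    _ = coeff (R := ℚ) N (d⁄dX ℚ G * ((Gu⁻¹ : (PowerSeries ℚ)ˣ) : PowerSeries ℚ)) := e5
    _ = ∑ d ∈ Finset.range (N+1),
          coeff (R := ℚ) N ((-(p (d+1))) •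
            (d⁄dX ℚ ((oneSubXPowUnit d : (PowerSeries ℚ)ˣ) : PowerSeries ℚ) *
              (((oneSubXPowUnit d)⁻¹ : (PowerSeries ℚ)ˣ) : PowerSeries ℚ))) := by
        rw [e7, map_sum]
    _ = ∑ d ∈ Finset.range (N+1),
          (if (d+1) ∣ (N+1) then ((d+1 : ℕ) : ℚ) * ((p (d+1) : ℤ) : ℚ) else 0) :=
        Finset.sum_congr rfl e8
    _ = ∑ e ∈ (N+1).divisors, (e : ℚ) * (p e : ℚ) := e9

end Stmt4Aux

/-- If for every `n ≥ 1` the coefficient of `t^n` in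
`(1 − Σ_{m≥1} a_m t^m)^{−1}` equals the coefficient of `t^n` in
`∏_{d=1}^{n} (1 − t^d)^{−p_d}` (integer powers of units) in `ℚ[[t]]`, then for every
`n ≥ 1`, `p n = (1/n) Σ_{d | n} d μ(n/d) Σ_{β ⊨ d} a_β / ℓ(β)`. -/
theorem stmt_4 (p : ℕ → ℤ) (a : ℕ → ℚ)
    (H : ∀ n : ℕ, 1 ≤ n →
      (PowerSeries.coeff (R := ℚ) n) ((PowerSeries.mk (fun k => if k = 0 then 1 else -a k))⁻¹) =
      (PowerSeries.coeff (R := ℚ) n)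
        ((↑(∏ d ∈ Finset.range n, (oneSubXPowUnit d) ^ (-(p (d + 1)))) : PowerSeries ℚ))) :
    ∀ n : ℕ, 1 ≤ n →
      (p n : ℚ) = (1 / (n : ℚ)) *
        ∑ d ∈ n.divisors, (d : ℚ) * ((ArithmeticFunction.moebius (n / d) : ℤ) : ℚ) *
          ∑ β : Composition d, (β.blocks.map a).prod / (β.length : ℚ) := by
  intro n hn
  classical
  set L : ℕ → ℚ := fun d => ∑ β : Composition d, (β.blocks.map a).prod / (β.length : ℚ) with hL
  have hkey : ∀ m : ℕ, 0 < m → ∑ e ∈ m.divisors, (e : ℚ) * (p e : ℚ) = (m : ℚ) * L m :=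
    fun m hm => (Stmt4Aux.keyA p a H m hm).symm
  have hmob := (ArithmeticFunction.sum_eq_iff_sum_mul_moebius_eq
    (f := fun e => (e : ℚ) * (p e : ℚ)) (g := fun m => (m : ℚ) * L m)).mp hkey n hn
  rw [Nat.sum_divisorsAntidiagonal' (f := fun x y => ((ArithmeticFunction.moebius x : ℤ) : ℚ) *
    ((y : ℚ) * L y))] at hmob
  have hn0 : (n : ℚ) ≠ 0 := by positivity
  have hsum : ∑ d ∈ n.divisors, (d : ℚ) * ((ArithmeticFunction.moebius (n / d) : ℤ) : ℚ) * L d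
      = (n : ℚ) * (p n : ℚ) := by
    rw [← hmob]
    exact Finset.sum_congr rfl fun d _ => by ring
  rw [hsum]
  field_simp
end

section
/- Let (p_n)_{n≥1} be a sequence of integers and (h_n)_{n≥1} a sequence of rational numbers such that for every n ≥ 1 the coefficient of t^n in 1 + Σ_{k≥1} h_k t^k equals the coefficient of t^n in the finite product ∏_{d=1}^{n} (1 − t^d)^{−p_d} in ℚ[[t]], where (1 − t^d)^{−p_d} denotes the (−p_d)-th power of the unit 1 − t^d. Then for every n ≥ 1, p_n = (1/n) · Σ_{d | n} d · μ(n/d) · Σ_{β ⊨ d} (−1)^{ℓ(β)−1} h_β / ℓ(β), where the inner sum runs over all compositions β of d, as an equality of rational numbers. -/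
open PowerSeries

noncomputable def geo (m : ℕ) : PowerSeries ℚ := PowerSeries.mk fun j => if m ∣ j then 1 else 0

lemma one_sub_X_pow_mul_geo (m : ℕ) (hm : 0 < m) :
    (1 - (X : PowerSeries ℚ) ^ m) * geo m = 1 := by
  ext j
  rw [sub_mul, one_mul, map_sub, PowerSeries.coeff_X_pow_mul']
  simp only [geo, coeff_mk, PowerSeries.coeff_one]
  by_cases hj : j = 0
  · subst hj
    have : ¬ m ≤ 0 := Nat.not_le_of_lt hm
    simp [this, dvd_zero]
  · by_cases hle : m ≤ j
    · by_cases hd : m ∣ j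
      · have : m ∣ j - m := (Nat.dvd_sub hd dvd_rfl)
        simp [hd, hle, this, hj]
      · have : ¬ m ∣ j - m := fun c => hd (by
          have := Nat.dvd_add c (dvd_refl m)
          rwa [Nat.sub_add_cancel hle] at this)
        simp [hd, hle, this, hj]
    · have hd : ¬ m ∣ j := fun c => hle (Nat.le_of_dvd (Nat.pos_of_ne_zero hj) c)
      simp [hd, hle, hj]

lemma oneSubXPowUnit_val (d : ℕ) :
    (↑(oneSubXPowUnit d) : PowerSeries ℚ) = 1 - X ^ (d + 1) := rfl

lemma oneSubXPowUnit_inv (d : ℕ) :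
    (↑(oneSubXPowUnit d)⁻¹ : PowerSeries ℚ) = geo (d + 1) :=
  Units.inv_eq_of_mul_eq_one_right (one_sub_X_pow_mul_geo (d + 1) (Nat.succ_pos d))

noncomputable def logD (u : (PowerSeries ℚ)ˣ) : PowerSeries ℚ :=
  (PowerSeries.derivative ℚ) ↑u * ↑u⁻¹

lemma logD_mul (u v : (PowerSeries ℚ)ˣ) : logD (u * v) = logD u + logD v := by
  unfold logD
  have hval : ((u * v : (PowerSeries ℚ)ˣ) : PowerSeries ℚ) = ↑u * ↑v := rfl
  have hinv : (((u * v)⁻¹ : (PowerSeries ℚ)ˣ) : PowerSeries ℚ) = ↑u⁻¹ * ↑v⁻¹ := by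
    rw [mul_inv_rev]; exact mul_comm _ _
  rw [hval, hinv, Derivation.leibniz]
  have : ((↑u : PowerSeries ℚ) • (PowerSeries.derivative ℚ) ↑v
      + (↑v : PowerSeries ℚ) • (PowerSeries.derivative ℚ) ↑u) * (↑u⁻¹ * ↑v⁻¹)
      = (↑u * ↑u⁻¹) * ((PowerSeries.derivative ℚ) ↑v * ↑v⁻¹)
      + (↑v * ↑v⁻¹) * ((PowerSeries.derivative ℚ) ↑u * ↑u⁻¹) := by
    simp only [smul_eq_mul]; ring
  rw [this, Units.mul_inv, Units.mul_inv, one_mul, one_mul, add_comm]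

noncomputable def logDHom : (PowerSeries ℚ)ˣ →* Multiplicative (PowerSeries ℚ) where
  toFun u := Multiplicative.ofAdd (logD u)
  map_one' := by
    simp [logD]
  map_mul' u v := by
    simp only [logD_mul, ofAdd_add]

lemma logD_zpow (u : (PowerSeries ℚ)ˣ) (z : ℤ) : logD (u ^ z) = z • logD u := by
  have := map_zpow logDHom u z
  have h2 := congrArg Multiplicative.toAdd this
  simpa [logDHom] using h2

lemma logD_prod {ι : Type*} (s : Finset ι) (f : ι → (PowerSeries ℚ)ˣ) :
    logD (∏ i ∈ s, f i) = ∑ i ∈ s, logD (f i) := by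
  classical
  induction s using Finset.induction_on with
  | empty => simp [logD]
  | @insert _ _ hx ih =>
    rw [Finset.prod_insert hx, Finset.sum_insert hx, logD_mul, ih]

lemma derivative_one_sub_X_pow (m : ℕ) :
    (PowerSeries.derivative ℚ) (1 - (X : PowerSeries ℚ) ^ (m+1)) = -((m+1 : ℚ) • X ^ m) := by
  rw [map_sub, Derivation.map_one_eq_zero, zero_sub, Derivation.leibniz_pow,
    PowerSeries.derivative_X, smul_eq_mul, mul_one, Nat.add_sub_cancel]
  congr 1
  rw [← Nat.cast_smul_eq_nsmul ℚ]
  norm_num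

lemma logD_oneSubXPowUnit (d : ℕ) :
    logD (oneSubXPowUnit d) = -((d+1 : ℚ) • (X ^ d * geo (d + 1))) := by
  unfold logD
  rw [oneSubXPowUnit_val, oneSubXPowUnit_inv, derivative_one_sub_X_pow]
  rw [neg_mul, smul_mul_assoc]

lemma X_pow_dvd_unit_zpow_sub_one (d : ℕ) (z : ℤ) (m : ℕ) (hm : m ≤ d + 1) :
    (X : PowerSeries ℚ) ^ m ∣ (↑(oneSubXPowUnit d ^ z) - 1) := by
  set I : Ideal (PowerSeries ℚ) := Ideal.span {(X : PowerSeries ℚ) ^ m} with hI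
  set π := Ideal.Quotient.mk I with hπ
  have hu : Units.map (π : PowerSeries ℚ →* PowerSeries ℚ ⧸ I) (oneSubXPowUnit d) = 1 := by
    ext
    show π ((1 : PowerSeries ℚ) - X ^ (d+1)) = 1
    have hmem : (X : PowerSeries ℚ) ^ (d+1) ∈ I := by
      rw [hI, Ideal.mem_span_singleton]
      exact pow_dvd_pow _ hm
    rw [map_sub, map_one, Ideal.Quotient.eq_zero_iff_mem.mpr hmem, sub_zero]
  have h1 : π (↑(oneSubXPowUnit d ^ z)) = 1 := by
    have : (↑(Units.map (π : PowerSeries ℚ →* PowerSeries ℚ ⧸ I) (oneSubXPowUnit d ^ z))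
        : PowerSeries ℚ ⧸ I) = π ↑(oneSubXPowUnit d ^ z) :=
      Units.coe_map (π : PowerSeries ℚ →* PowerSeries ℚ ⧸ I) (oneSubXPowUnit d ^ z)
    rw [← this, map_zpow, hu, one_zpow, Units.val_one]
  have h0 : π (↑(oneSubXPowUnit d ^ z) - 1) = 0 := by
    rw [map_sub, h1, map_one, sub_self]
  rwa [Ideal.Quotient.eq_zero_iff_mem, Ideal.mem_span_singleton] at h0

lemma coeff_eq_of_X_pow_dvd_sub {f g : PowerSeries ℚ} {m j : ℕ}
    (hd : (X : PowerSeries ℚ) ^ m ∣ f - g) (hj : j < m) :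
    (PowerSeries.coeff j) f = (PowerSeries.coeff j) g := by
  have := PowerSeries.X_pow_dvd_iff.mp hd j hj
  rw [map_sub, sub_eq_zero] at this
  exact this

lemma coeff_X_mul_logD_prod (p : ℕ → ℤ) (n j : ℕ) (hj1 : 1 ≤ j) (hjn : j ≤ n) :
    (PowerSeries.coeff j) (X * logD (∏ d ∈ Finset.range n, (oneSubXPowUnit d) ^ (-(p (d + 1)))))
    = ∑ e ∈ j.divisors, (e : ℚ) * (p e : ℚ) := by
  have hjne : j ≠ 0 := Nat.one_le_iff_ne_zero.mp hj1
  rw [logD_prod, Finset.mul_sum, map_sum]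
  have hterm : ∀ d ∈ Finset.range n,
      (PowerSeries.coeff j) (X * logD ((oneSubXPowUnit d) ^ (-(p (d + 1)))))
      = if (d+1) ∈ j.divisors then ((d+1 : ℚ) * (p (d+1) : ℚ)) else 0 := by
    intro d _
    rw [logD_zpow, logD_oneSubXPowUnit]
    have hX : (X : PowerSeries ℚ) * (X ^ d * geo (d+1)) = X ^ (d+1) * geo (d+1) := by
      rw [← mul_assoc, ← pow_succ']
    have hcoeff : (PowerSeries.coeff j) ((X : PowerSeries ℚ) ^ (d+1) * geo (d+1))
        = if (d+1) ∈ j.divisors then 1 else 0 := by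
      rw [PowerSeries.coeff_X_pow_mul']
      simp only [geo, coeff_mk, Nat.mem_divisors]
      by_cases hle : d + 1 ≤ j
      · by_cases hdvd : (d+1) ∣ j
        · have hsub : (d+1) ∣ j - (d+1) := Nat.dvd_sub hdvd dvd_rfl
          simp [hle, hdvd, hsub, hjne]
        · have hsub : ¬ (d+1) ∣ j - (d+1) := fun c => hdvd (by
            have h2 := Nat.dvd_add c (dvd_refl (d+1))
            rwa [Nat.sub_add_cancel hle] at h2)
          simp [hle, hdvd, hsub]
      · have hdvd : ¬ (d+1) ∣ j := fun c => hle (Nat.le_of_dvd (by omega) c)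
        simp [hle, hdvd]
    rw [smul_neg, mul_neg, mul_smul_comm, mul_smul_comm, hX, map_neg, map_zsmul, map_smul, hcoeff]
    split_ifs with hdm
    · rw [smul_eq_mul, mul_one, ← Int.cast_smul_eq_zsmul ℚ, smul_eq_mul]
      push_cast
      ring
    · simp
  rw [Finset.sum_congr rfl hterm]
  have hshift : ∑ d ∈ Finset.range n,
      (if (d+1) ∈ j.divisors then ((d+1 : ℚ) * (p (d+1) : ℚ)) else 0)
      = ∑ e ∈ Finset.range (n+1), (if e ∈ j.divisors then ((e : ℚ) * (p e : ℚ)) else 0) := by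
    rw [Finset.sum_range_succ']
    simp [Nat.mem_divisors]
  rw [hshift, Finset.sum_ite_mem, Finset.inter_eq_right.mpr]
  intro e he
  rw [Nat.mem_divisors] at he
  have : e ≤ j := Nat.le_of_dvd (by omega) he.1
  simp only [Finset.mem_range]
  omega

lemma comp_ofFn_eq {m k : ℕ} (β : Composition m) (hβ : β.length = k) :
    List.ofFn (fun i : Fin k => β.blocks.getD i 0) = β.blocks := by
  have hk : β.blocks.length = k := β.blocks_length.trans hβ
  apply List.ext_getElem
  · simp [hk]
  · intro i h1 h2
    simp only [List.getElem_ofFn]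
    exact List.getD_eq_getElem β.blocks 0 h2

lemma coeff_pow_eq_sum_compositions (g : ℕ → ℚ) (hg : g 0 = 0) (k m : ℕ) :
    (PowerSeries.coeff m) ((PowerSeries.mk g) ^ k)
    = ∑ β ∈ Finset.univ.filter (fun β : Composition m => β.length = k),
        (β.blocks.map g).prod := by
  classical
  rw [PowerSeries.coeff_pow]
  simp only [coeff_mk]
  rw [← Finset.sum_filter_add_sum_filter_not (Finset.finsuppAntidiag (Finset.range k) m)
    (fun l => ∀ i ∈ Finset.range k, l i ≠ 0)]
  have hzero : ∑ l ∈ (Finset.finsuppAntidiag (Finset.range k) m).filter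
      (fun l => ¬ ∀ i ∈ Finset.range k, l i ≠ 0), ∏ i ∈ Finset.range k, g (l i) = 0 := by
    apply Finset.sum_eq_zero
    intro l hl
    rw [Finset.mem_filter] at hl
    push_neg at hl
    obtain ⟨i, hi, hi0⟩ := hl.2
    exact Finset.prod_eq_zero hi (by rw [hi0, hg])
  rw [hzero, add_zero]
  have hSmem : ∀ l : ℕ →₀ ℕ, l ∈ (Finset.finsuppAntidiag (Finset.range k) m).filter
      (fun l => ∀ i ∈ Finset.range k, l i ≠ 0) →
      (∑ i ∈ Finset.range k, l i = m ∧ l.support ⊆ Finset.range k) ∧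
        ∀ i ∈ Finset.range k, l i ≠ 0 := by
    intro l hl
    rw [Finset.mem_filter, Finset.mem_finsuppAntidiag] at hl
    exact hl
  refine Finset.sum_bij'
    (fun l hl => (⟨List.ofFn (fun i : Fin k => l i),
      fun {x} hx => ?_, ?_⟩ : Composition m))
    (fun β hβ => Finsupp.onFinset (Finset.range k)
      (fun i => β.blocks.getD i 0) (fun a ha => ?_)) ?_ ?_ ?_ ?_ ?_
  · -- blocks_pos
    obtain ⟨i, rfl⟩ := List.mem_ofFn.mp hx
    exact Nat.pos_of_ne_zero ((hSmem l hl).2 i (Finset.mem_range.mpr i.isLt))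
  · -- blocks_sum
    rw [List.sum_ofFn]
    rw [Fin.sum_univ_eq_sum_range]
    exact (hSmem l hl).1.1
  · -- onFinset support
    rw [Finset.mem_range]
    by_contra hak
    push_neg at hak
    have hβk : β.blocks.length = k := by
      rw [Finset.mem_filter] at hβ
      exact β.blocks_length.trans hβ.2
    exact ha (List.getD_eq_default _ _ (by omega))
  · -- hi : composition lands in filter
    intro l hl
    rw [Finset.mem_filter]
    refine ⟨Finset.mem_univ _, ?_⟩
    show (List.ofFn fun i : Fin k => l i).length = k
    rw [List.length_ofFn]
  · -- hj : finsupp lands in filter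
    intro β hβ
    rw [Finset.mem_filter] at hβ
    have hβk : β.blocks.length = k := β.blocks_length.trans hβ.2
    rw [Finset.mem_filter, Finset.mem_finsuppAntidiag]
    refine ⟨⟨?_, Finsupp.support_onFinset_subset⟩, ?_⟩
    · show ∑ i ∈ Finset.range k, β.blocks.getD i 0 = m
      calc ∑ i ∈ Finset.range k, β.blocks.getD i 0
          = (List.ofFn (fun i : Fin k => β.blocks.getD i 0)).sum := by
            rw [List.sum_ofFn]
            exact (Fin.sum_univ_eq_sum_range (fun i => β.blocks.getD i 0) k).symm
        _ = β.blocks.sum := by rw [comp_ofFn_eq β hβ.2]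
        _ = m := β.blocks_sum
    · intro i hi
      show β.blocks.getD i 0 ≠ 0
      rw [Finset.mem_range] at hi
      rw [List.getD_eq_getElem _ _ (by omega : i < β.blocks.length)]
      exact Nat.pos_iff_ne_zero.mp (β.blocks_pos (β.blocks.getElem_mem _))
  · -- left_inv
    intro l hl
    ext a
    show (List.ofFn fun i : Fin k => l i).getD a 0 = l a
    by_cases hak : a < k
    · rw [List.getD_eq_getElem _ _ (by simpa using hak)]
      simp
    · rw [List.getD_eq_default _ _ (by simpa using hak)]
      have := (hSmem l hl).1.2
      by_contra hla
      have : a ∈ Finset.range k := this (Finsupp.mem_support_iff.mpr (Ne.symm hla))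
      rw [Finset.mem_range] at this
      omega
  · -- right_inv
    intro β hβ
    rw [Finset.mem_filter] at hβ
    apply Composition.ext
    show List.ofFn (fun i : Fin k => β.blocks.getD i 0) = β.blocks
    exact comp_ofFn_eq β hβ.2
  · -- h : values
    intro l hl
    show ∏ i ∈ Finset.range k, g (l i) = _
    rw [List.map_ofFn, List.prod_ofFn]
    exact (Fin.prod_univ_eq_prod_range _ _).symm

lemma prod_units_sub_one_dvd {ι : Type*} {s : Finset ι} {u : ι → (PowerSeries ℚ)ˣ}
    {x : PowerSeries ℚ} (hx : ∀ i ∈ s, x ∣ ((u i : PowerSeries ℚ) - 1)) :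
    x ∣ ((↑(∏ i ∈ s, u i) : PowerSeries ℚ) - 1) := by
  classical
  induction s using Finset.induction_on with
  | empty => simp
  | @insert a s ha ih =>
    rw [Finset.prod_insert ha]
    have h1 : (↑(u a * ∏ i ∈ s, u i) : PowerSeries ℚ) - 1
        = (u a : PowerSeries ℚ) * ((↑(∏ i ∈ s, u i) : PowerSeries ℚ) - 1)
          + ((u a : PowerSeries ℚ) - 1) := by
      push_cast
      ring
    rw [h1]
    exact dvd_add (Dvd.dvd.mul_left (ih (fun i hi => hx i (Finset.mem_insert_of_mem hi))) _)
      (hx a (Finset.mem_insert_self a s))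

-- hypothesis-to-truncation lemma
lemma F_sub_G_dvd (p : ℕ → ℤ) (h : ℕ → ℚ)
    (H : ∀ n : ℕ, 1 ≤ n →
      (PowerSeries.coeff n) (PowerSeries.mk (fun k => if k = 0 then 1 else h k)) =
      (PowerSeries.coeff n)
        ((↑(∏ d ∈ Finset.range n, (oneSubXPowUnit d) ^ (-(p (d + 1)))) : PowerSeries ℚ)))
    (m : ℕ) :
    (X : PowerSeries ℚ) ^ (m + 1) ∣
      (PowerSeries.mk (fun k => if k = 0 then 1 else h k)
        - (↑(∏ d ∈ Finset.range m, (oneSubXPowUnit d) ^ (-(p (d + 1)))) : PowerSeries ℚ)) := by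
  rw [PowerSeries.X_pow_dvd_iff]
  intro j hj
  rw [map_sub, sub_eq_zero]
  have hsplit : ∀ j ≤ m, (PowerSeries.coeff j)
      ((↑(∏ d ∈ Finset.range m, (oneSubXPowUnit d) ^ (-(p (d + 1)))) : PowerSeries ℚ))
      = (PowerSeries.coeff j)
      ((↑(∏ d ∈ Finset.range j, (oneSubXPowUnit d) ^ (-(p (d + 1)))) : PowerSeries ℚ)) := by
    intro j hjm
    apply coeff_eq_of_X_pow_dvd_sub (m := j + 1) _ (Nat.lt_succ_self j)
    have : (∏ d ∈ Finset.range m, (oneSubXPowUnit d) ^ (-(p (d + 1))))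
        = (∏ d ∈ Finset.range j, (oneSubXPowUnit d) ^ (-(p (d + 1))))
          * (∏ d ∈ Finset.Ico j m, (oneSubXPowUnit d) ^ (-(p (d + 1)))) := by
      rw [← Finset.prod_range_mul_prod_Ico _ hjm]
    rw [this, Units.val_mul]
    have h2 : (↑(∏ d ∈ Finset.range j, (oneSubXPowUnit d) ^ (-(p (d + 1)))) : PowerSeries ℚ)
        * (↑(∏ d ∈ Finset.Ico j m, (oneSubXPowUnit d) ^ (-(p (d + 1)))) : PowerSeries ℚ)
        - (↑(∏ d ∈ Finset.range j, (oneSubXPowUnit d) ^ (-(p (d + 1)))) : PowerSeries ℚ)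
        = (↑(∏ d ∈ Finset.range j, (oneSubXPowUnit d) ^ (-(p (d + 1)))) : PowerSeries ℚ)
          * ((↑(∏ d ∈ Finset.Ico j m, (oneSubXPowUnit d) ^ (-(p (d + 1)))) : PowerSeries ℚ) - 1) := by
      ring
    rw [h2]
    apply Dvd.dvd.mul_left
    apply prod_units_sub_one_dvd
    intro d hd
    rw [Finset.mem_Ico] at hd
    exact X_pow_dvd_unit_zpow_sub_one d _ (j+1) (by omega)
  by_cases hj0 : j = 0
  · subst hj0
    rw [hsplit 0 (Nat.zero_le m)]
    simp only [Finset.range_zero, Finset.prod_empty, Units.val_one]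
    simp
  · rw [hsplit j (by omega), ← H j (by omega)]

lemma key (p : ℕ → ℤ) (h : ℕ → ℚ)
    (H : ∀ n : ℕ, 1 ≤ n →
      (PowerSeries.coeff n) (PowerSeries.mk (fun k => if k = 0 then 1 else h k)) =
      (PowerSeries.coeff n)
        ((↑(∏ d ∈ Finset.range n, (oneSubXPowUnit d) ^ (-(p (d + 1)))) : PowerSeries ℚ)))
    (m : ℕ) (hm : 1 ≤ m) :
    (m : ℚ) * (∑ β : Composition m,
        (-1 : ℚ) ^ (β.length - 1) * (β.blocks.map h).prod / (β.length : ℚ))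
    = ∑ e ∈ m.divisors, (e : ℚ) * (p e : ℚ) := by
  classical
  set g : ℕ → ℚ := fun k => if k = 0 then 0 else h k with hgdef
  set F : PowerSeries ℚ := PowerSeries.mk (fun k => if k = 0 then 1 else h k) with hFdef
  set f : PowerSeries ℚ := PowerSeries.mk g with hfdef
  set Gu : (PowerSeries ℚ)ˣ := ∏ d ∈ Finset.range m, (oneSubXPowUnit d) ^ (-(p (d + 1))) with hGudef
  set G : PowerSeries ℚ := ↑Gu with hGdef
  have hFf : F = 1 + f := by
    ext j
    rw [map_add]
    by_cases hj : j = 0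
    · subst hj; simp [hFdef, hfdef, hgdef]
    · simp [hFdef, hfdef, hgdef, hj, PowerSeries.coeff_one]
  have hXf : (X : PowerSeries ℚ) ∣ f := by
    rw [PowerSeries.X_dvd_iff]
    simp [hfdef, hgdef, ← PowerSeries.coeff_zero_eq_constantCoeff_apply]
  set D := PowerSeries.derivative ℚ with hD
  set P : PowerSeries ℚ :=
    ∑ k ∈ Finset.range m, ((-1 : ℚ) ^ k / (k + 1)) • f ^ (k + 1) with hPdef
  -- derivative of P
  have hDP : D P = (∑ k ∈ Finset.range m, (-f) ^ k) * D f := by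
    rw [hPdef, map_sum, Finset.sum_mul]
    apply Finset.sum_congr rfl
    intro k _
    rw [Derivation.map_smul, Derivation.leibniz_pow, Nat.add_sub_cancel, smul_eq_mul,
      ← Nat.cast_smul_eq_nsmul ℚ, smul_smul]
    have hc : (-1 : ℚ) ^ k / (k + 1) * ((k + 1 : ℕ) : ℚ) = (-1 : ℚ) ^ k := by
      have : ((k : ℚ) + 1) ≠ 0 := by positivity
      push_cast
      field_simp
    rw [hc, Algebra.smul_def, map_pow, map_neg, map_one, neg_pow]
    ring
  -- geometric sum
  have hgeom : (∑ k ∈ Finset.range m, (-f) ^ k) * (-F) = (-f) ^ m - 1 := by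
    have := geom_sum_mul (-f) m
    rw [hFf]
    calc (∑ k ∈ Finset.range m, (-f) ^ k) * -(1 + f)
        = (∑ k ∈ Finset.range m, (-f) ^ k) * (-f - 1) := by ring
      _ = (-f) ^ m - 1 := geom_sum_mul (-f) m
  have hFDP : F * D P = (1 - (-f) ^ m) * D f := by
    rw [hDP]
    calc F * ((∑ k ∈ Finset.range m, (-f) ^ k) * D f)
        = -((∑ k ∈ Finset.range m, (-f) ^ k) * (-F)) * D f := by ring
      _ = (1 - (-f) ^ m) * D f := by rw [hgeom]; ring
  -- divisibility chain
  have hdvdFG : (X : PowerSeries ℚ) ^ (m + 1) ∣ F - G := F_sub_G_dvd p h H m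
  have hDFf : D F = D f := by rw [hFf, map_add, Derivation.map_one_eq_zero, zero_add]
  have hdvd1 : (X : PowerSeries ℚ) ^ (m + 1) ∣ X * (F * D P) - X * D F := by
    rw [hFDP, hDFf]
    have heq : (X : PowerSeries ℚ) * ((1 - (-f) ^ m) * D f) - X * D f
        = -(X * ((-f) ^ m * D f)) := by ring
    rw [heq, dvd_neg, pow_succ']
    exact mul_dvd_mul_left X (Dvd.dvd.mul_right
      (pow_dvd_pow_of_dvd ((dvd_neg).mpr hXf) m) (D f))
  have hdvd2 : (X : PowerSeries ℚ) ^ (m + 1) ∣ X * D F - X * D G := by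
    have hsub : (X : PowerSeries ℚ) ^ m ∣ D F - D G := by
      rw [PowerSeries.X_pow_dvd_iff]
      intro j hj
      rw [← map_sub, hD, PowerSeries.coeff_derivative]
      have : (PowerSeries.coeff (j+1)) (F - G) = 0 := by
        have := PowerSeries.X_pow_dvd_iff.mp hdvdFG (j+1) (by omega)
        exact this
      rw [this, zero_mul]
    have heq : X * D F - X * D G = X * (D F - D G) := by ring
    rw [heq, pow_succ']
    exact mul_dvd_mul_left X hsub
  have hdvd3 : (X : PowerSeries ℚ) ^ (m + 1) ∣ G * (X * D P) - F * (X * D P) := by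
    have heq : G * (X * D P) - F * (X * D P) = -((F - G) * (X * D P)) := by ring
    rw [heq, dvd_neg]
    exact hdvdFG.mul_right _
  have hdvd4 : (X : PowerSeries ℚ) ^ (m + 1) ∣ G * (X * D P) - X * D G := by
    have heq : G * (X * D P) - X * D G = (G * (X * D P) - F * (X * D P))
        + (X * (F * D P) - X * D F) + (X * D F - X * D G) := by ring
    rw [heq]
    exact dvd_add (dvd_add hdvd3 hdvd1) hdvd2
  have hdvd5 : (X : PowerSeries ℚ) ^ (m + 1) ∣ X * D P - X * logD Gu := by
    obtain ⟨s, hs⟩ := hdvd4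
    refine ⟨s * (↑Gu⁻¹ : PowerSeries ℚ), ?_⟩
    have hGG : G * (↑Gu⁻¹ : PowerSeries ℚ) = 1 := by
      rw [hGdef]
      exact Units.mul_inv Gu
    have h2 : X * D P - X * logD Gu = (G * (X * D P) - X * D G) * (↑Gu⁻¹ : PowerSeries ℚ) := by
      have expand : (G * (X * D P) - X * D G) * (↑Gu⁻¹ : PowerSeries ℚ)
          = (G * (↑Gu⁻¹ : PowerSeries ℚ)) * (X * D P)
            - X * (D G * (↑Gu⁻¹ : PowerSeries ℚ)) := by ring
      rw [expand, hGG, one_mul]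
      rfl
    rw [h2, hs, mul_assoc]
  -- extract coefficient m
  have hcoeffm : (PowerSeries.coeff m) (X * D P) = (PowerSeries.coeff m) (X * logD Gu) := by
    have := PowerSeries.X_pow_dvd_iff.mp hdvd5 m (by omega)
    rw [map_sub, sub_eq_zero] at this
    exact this
  have hRHS : (PowerSeries.coeff m) (X * logD Gu) = ∑ e ∈ m.divisors, (e : ℚ) * (p e : ℚ) :=
    coeff_X_mul_logD_prod p m m hm le_rfl
  -- coefficient of P at m
  have hcoeffP : (PowerSeries.coeff m) P = ∑ β : Composition m,
      (-1 : ℚ) ^ (β.length - 1) * (β.blocks.map h).prod / (β.length : ℚ) := by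
    rw [hPdef, map_sum]
    have hterm : ∀ k ∈ Finset.range m, (PowerSeries.coeff m) (((-1 : ℚ) ^ k / (k + 1)) • f ^ (k + 1))
        = ((-1 : ℚ) ^ k / (k + 1)) * ∑ β ∈ Finset.univ.filter (fun β : Composition m => β.length = k + 1),
            (β.blocks.map g).prod := by
      intro k _
      rw [map_smul, smul_eq_mul, hfdef, coeff_pow_eq_sum_compositions g (by simp [hgdef]) (k+1) m]
    rw [Finset.sum_congr rfl hterm]
    rw [← Finset.sum_fiberwise_of_maps_to (t := Finset.range m)
      (g := fun β : Composition m => β.length - 1)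
      (fun β _ => Finset.mem_range.mpr (by
        have h1 := Composition.length_le β
        have h2 := Composition.length_pos_of_pos β (by omega : 0 < m)
        show β.length - 1 < m
        omega))]
    apply Finset.sum_congr rfl
    intro k hk
    have hfilter : Finset.univ.filter (fun β : Composition m => β.length - 1 = k)
        = Finset.univ.filter (fun β : Composition m => β.length = k + 1) := by
      apply Finset.filter_congr
      intro β _
      have h2 := Composition.length_pos_of_pos β (by omega : 0 < m)
      constructor
      · intro hh; omega
      · intro hh; omega
    rw [hfilter, Finset.mul_sum]
    apply Finset.sum_congr rfl
    intro β hβ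
    rw [Finset.mem_filter] at hβ
    have hlen : β.length = k + 1 := hβ.2
    have hmap : β.blocks.map g = β.blocks.map h := by
      apply List.map_congr_left
      intro x hx
      have hx0 := β.blocks_pos hx
      simp [hgdef, Nat.pos_iff_ne_zero.mp hx0]
    rw [hmap, hlen, Nat.add_sub_cancel]
    push_cast
    ring
  have hXDP : (PowerSeries.coeff m) (X * D P) = (m : ℚ) * (PowerSeries.coeff m) P := by
    obtain ⟨m', rfl⟩ : ∃ m', m = m' + 1 := ⟨m - 1, by omega⟩
    rw [PowerSeries.coeff_succ_X_mul, hD, PowerSeries.coeff_derivative]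
    push_cast
    ring
  calc (m : ℚ) * (∑ β : Composition m,
        (-1 : ℚ) ^ (β.length - 1) * (β.blocks.map h).prod / (β.length : ℚ))
      = (m : ℚ) * (PowerSeries.coeff m) P := by rw [hcoeffP]
    _ = (PowerSeries.coeff m) (X * D P) := hXDP.symm
    _ = (PowerSeries.coeff m) (X * logD Gu) := hcoeffm
    _ = ∑ e ∈ m.divisors, (e : ℚ) * (p e : ℚ) := hRHS

/-- If for every `n ≥ 1` the coefficient of `t^n` in `1 + Σ_{k≥1} h_k t^k`
equals the coefficient of `t^n` in `∏_{d=1}^{n} (1 − t^d)^{−p_d}` (integer powers of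
units) in `ℚ[[t]]`, then for every `n ≥ 1`,
`p n = (1/n) Σ_{d | n} d μ(n/d) Σ_{β ⊨ d} (−1)^{ℓ(β)−1} h_β / ℓ(β)`. -/
theorem stmt_5 (p : ℕ → ℤ) (h : ℕ → ℚ)
    (H : ∀ n : ℕ, 1 ≤ n →
      (PowerSeries.coeff n) (PowerSeries.mk (fun k => if k = 0 then 1 else h k)) =
      (PowerSeries.coeff n)
        ((↑(∏ d ∈ Finset.range n, (oneSubXPowUnit d) ^ (-(p (d + 1)))) : PowerSeries ℚ))) :
    ∀ n : ℕ, 1 ≤ n →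
      (p n : ℚ) = (1 / (n : ℚ)) *
        ∑ d ∈ n.divisors, (d : ℚ) * ((ArithmeticFunction.moebius (n / d) : ℤ) : ℚ) *
          ∑ β : Composition d,
            (-1 : ℚ) ^ (β.length - 1) * (β.blocks.map h).prod / (β.length : ℚ) := by
  intro n hn
  set L : ℕ → ℚ := fun d => ∑ β : Composition d,
      (-1 : ℚ) ^ (β.length - 1) * (β.blocks.map h).prod / (β.length : ℚ) with hL
  have KEY : ∀ m : ℕ, m > 0 → ∑ e ∈ m.divisors, ((e : ℚ) * (p e : ℚ)) = (m : ℚ) * L m :=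
    fun m hm => (key p h H m hm).symm
  have MOB := ArithmeticFunction.sum_eq_iff_sum_smul_moebius_eq.mp KEY n (by omega)
  have MOB2 : ∑ i ∈ n.divisors,
      (ArithmeticFunction.moebius (n / i) : ℤ) • ((i : ℚ) * L i) = (n : ℚ) * (p n : ℚ) := by
    rw [← Nat.sum_divisorsAntidiagonal'
      (f := fun a b => (ArithmeticFunction.moebius a : ℤ) • ((b : ℚ) * L b))]
    exact MOB
  have hsum : ∑ d ∈ n.divisors, (d : ℚ) * ((ArithmeticFunction.moebius (n / d) : ℤ) : ℚ) * L d
      = (n : ℚ) * (p n : ℚ) := by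
    rw [← MOB2]
    apply Finset.sum_congr rfl
    intro i _
    rw [zsmul_eq_mul]
    push_cast
    ring
  rw [hsum]
  have hn0 : (n : ℚ) ≠ 0 := by
    exact_mod_cast Nat.pos_iff_ne_zero.mp (by omega)
  field_simp
end

section
/- Let X be a linearly ordered graded set, i.e., a linearly ordered set equipped with a degree function deg : X → {1, 2, 3, …} such that for each n ≥ 1 the set X^{(n)} of elements of degree n is finite, with a_n = |X^{(n)}|. Then for every n ≥ 1, the set of Lyndon words over X of degree n is finite and its cardinality equals the rational number (1/n) · Σ_{d | n} d · μ(n/d) · Σ_{β ⊨ d} a_β / ℓ(β), where the inner sum runs over all compositions β of d. -/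
/-- A nonempty word `w` over a linearly ordered alphabet is Lyndon if it is strictly
lexicographically smaller than each of its nontrivial rotations
`cyc^k(w)` for `1 ≤ k ≤ length w − 1`. -/
def IsLyndon {X : Type*} [LinearOrder X] (w : List X) : Prop :=
  w ≠ [] ∧ ∀ k : ℕ, 1 ≤ k → k ≤ w.length - 1 → List.Lex (· < ·) w (w.rotate k)

namespace Stmt10

open List Finset

/-! ### Word powers -/

def pw {α : Type*} (u : List α) : ℕ → List α
  | 0 => []
  | m + 1 => u ++ pw u m

variable {α : Type*}

@[simp] lemma pw_zero (u : List α) : pw u 0 = [] := rfl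
@[simp] lemma pw_succ (u : List α) (m : ℕ) : pw u (m+1) = u ++ pw u m := rfl

@[simp] lemma length_pw (u : List α) (m : ℕ) : (pw u m).length = m * u.length := by
  induction m with
  | zero => simp
  | succ m ih => simp [ih, Nat.succ_mul]; ring

lemma sum_map_pw (f : α → ℕ) (u : List α) (m : ℕ) :
    ((pw u m).map f).sum = m * (u.map f).sum := by
  induction m with
  | zero => simp
  | succ m ih => simp [ih, Nat.succ_mul]; ring

lemma take_length_pw (u : List α) {m : ℕ} (hm : 0 < m) :
    (pw u m).take u.length = u := by
  obtain ⟨m, rfl⟩ := Nat.exists_eq_add_of_lt hm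
  simp [List.take_left]

lemma take_pw (u : List α) {j m : ℕ} (hj : j ≤ m) :
    (pw u m).take (j * u.length) = pw u j := by
  induction j generalizing m with
  | zero => simp
  | succ j ih =>
    obtain ⟨m, rfl⟩ := Nat.exists_eq_add_of_le hj
    rw [Nat.add_comm (j+1) m]  -- m + (j+1)
    have : pw u (m + (j + 1)) = u ++ pw u (m + j) := by
      rw [Nat.add_succ]; rfl
    rw [this, List.take_append]
    have h1 : u.take ((j+1) * u.length) = u :=
      List.take_of_length_le (by nlinarith)
    have h2 : (j+1) * u.length - u.length = j * u.length := by ring_nf; omega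
    rw [h1, h2, ih (by omega)]
    rfl

lemma pw_cyc (d t : List α) (m : ℕ) :
    pw (d ++ t) (m + 1) = d ++ pw (t ++ d) m ++ t := by
  induction m with
  | zero => simp
  | succ m ih => simp only [pw_succ] at *; simp [ih, List.append_assoc]

lemma rotate_pw (u : List α) {k : ℕ} (hk : k ≤ u.length) (m : ℕ) :
    (pw u m).rotate k = pw (u.rotate k) m := by
  cases m with
  | zero => simp
  | succ m =>
    have hk' : k ≤ (pw u (m+1)).length := by simp; nlinarith
    rw [List.rotate_eq_drop_append_take hk', List.rotate_eq_drop_append_take hk]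
    have hd : (pw u (m+1)).drop k = u.drop k ++ pw u m := by
      rw [pw_succ, List.drop_append]
      have : k - u.length = 0 := by omega
      rw [this, List.drop_zero]
    have ht : (pw u (m+1)).take k = u.take k := by
      rw [pw_succ, List.take_append]
      have : k - u.length = 0 := by omega
      simp [this]
    rw [hd, ht, pw_cyc, List.take_append_drop]

/-! ### Primitivity and rotations -/

variable {X : Type*} [LinearOrder X]

def Primitive {α : Type*} (w : List α) : Prop :=
  w ≠ [] ∧ ∀ k : ℕ, 0 < k → k < w.length → w.rotate k ≠ w

lemma Primitive.length_pos {w : List α} (h : Primitive w) : 0 < w.length :=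
  List.length_pos_iff.mpr h.1

lemma rotate_fix_aux {w : List α} {i j : ℕ} (hij : i < j) (hj : j < w.length)
    (h : w.rotate i = w.rotate j) : w.rotate (j - i) = w := by
  have h2 := congrArg (fun l => List.rotate l (w.length - i)) h
  simp only [List.rotate_rotate] at h2
  have e1 : i + (w.length - i) = w.length := by omega
  have e2 : j + (w.length - i) = w.length + (j - i) := by omega
  rw [e1, e2, List.rotate_length, ← List.rotate_rotate, List.rotate_length] at h2
  exact h2.symm

lemma Primitive.eq_of_rotate_eq {w : List α} (hp : Primitive w) {i j : ℕ}
    (hi : i < w.length) (hj : j < w.length) (h : w.rotate i = w.rotate j) : i = j := by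
  rcases Nat.lt_trichotomy i j with hij | hij | hij
  · exact absurd (rotate_fix_aux hij hj h) (hp.2 _ (by omega) (by omega))
  · exact hij
  · exact absurd (rotate_fix_aux hij hi h.symm) (hp.2 _ (by omega) (by omega))

lemma Primitive.rotate {w : List α} (hp : Primitive w) (k : ℕ) : Primitive (w.rotate k) := by
  have hl : 0 < w.length := hp.length_pos
  constructor
  · rw [← List.length_pos_iff, List.length_rotate]; exact hl
  · intro k' hk' hk'l heq
    rw [List.length_rotate] at hk'l
    rw [List.rotate_rotate] at heq
    have h1 : w.rotate ((k + k') % w.length) = w.rotate (k % w.length) := by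
      rw [List.rotate_mod, List.rotate_mod]; exact heq
    have h2 := hp.eq_of_rotate_eq (Nat.mod_lt _ hl) (Nat.mod_lt _ hl) h1
    have h3 : (k % w.length + k') % w.length = k % w.length := by
      conv_rhs => rw [← h2, Nat.add_mod, Nat.mod_eq_of_lt hk'l]
    set K := k % w.length with hK
    have hKl : K < w.length := Nat.mod_lt _ hl
    rcases Nat.lt_or_ge (K + k') w.length with h | h
    · rw [Nat.mod_eq_of_lt h] at h3; omega
    · rw [Nat.mod_eq_sub_mod h, Nat.mod_eq_of_lt (by omega)] at h3; omega

lemma rotate_rotate_inv {α : Type*} (w : List α) {k : ℕ} (hw : w ≠ []) :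
    (w.rotate k).rotate (w.length - k % w.length) = w := by
  have hl : 0 < w.length := List.length_pos_iff.mpr hw
  have hk : k % w.length < w.length := Nat.mod_lt _ hl
  rw [List.rotate_rotate, ← List.rotate_mod]
  have e1 : (k + (w.length - k % w.length)) % w.length = 0 := by
    have hd := Nat.div_add_mod k w.length
    have e2 : k + (w.length - k % w.length) = (k / w.length + 1) * w.length := by
      calc k + (w.length - k % w.length)
          = (w.length * (k / w.length) + k % w.length) + (w.length - k % w.length) := by rw [hd]
        _ = w.length * (k / w.length) + w.length := by omega
        _ = (k / w.length + 1) * w.length := by ring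
    rw [e2, Nat.mul_mod_left]
  rw [e1, List.rotate_zero]

lemma isLyndon_iff {w : List X} :
    IsLyndon w ↔ w ≠ [] ∧ ∀ k : ℕ, 0 < k → k < w.length → w < w.rotate k := by
  constructor
  · rintro ⟨h1, h2⟩
    exact ⟨h1, fun k hk hkl => h2 k hk (by omega)⟩
  · rintro ⟨h1, h2⟩
    have hl : 0 < w.length := List.length_pos_iff.mpr h1
    exact ⟨h1, fun k hk hkl => h2 k hk (by omega)⟩

lemma lyndon_primitive {w : List X} (h : IsLyndon w) : Primitive w := by
  rw [isLyndon_iff] at h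
  refine ⟨h.1, fun k hk hkl heq => ?_⟩
  have := h.2 k hk hkl
  rw [heq] at this
  exact lt_irrefl _ this

lemma lyndon_lt_rotate {v : List X} (h : IsLyndon v) (k : ℕ) (hne : v.rotate k ≠ v) :
    v < v.rotate k := by
  have h' := isLyndon_iff.mp h
  have hl : 0 < v.length := List.length_pos_iff.mpr h'.1
  have hk0 : k % v.length ≠ 0 := by
    intro h0
    rw [← List.rotate_mod, h0, List.rotate_zero] at hne
    exact hne rfl
  rw [← List.rotate_mod]
  exact h'.2 _ (Nat.pos_of_ne_zero hk0) (Nat.mod_lt _ hl)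

lemma lyndon_eq_of_rotate {v v' : List X} (hv : IsLyndon v) (hv' : IsLyndon v')
    {k : ℕ} (h : v.rotate k = v') : v = v' := by
  by_contra hne
  have h1 : v < v' := h ▸ lyndon_lt_rotate hv k (by rw [h]; exact fun hc => hne hc.symm)
  have h2 : (v'.rotate (v.length - k % v.length)) = v := by
    rw [← h, rotate_rotate_inv _ hv.1]
  have h3 : v' < v := h2 ▸ lyndon_lt_rotate hv' _ (by rw [h2]; exact fun hc => hne hc)
  exact absurd h1 (not_lt.mpr h3.le)

lemma exists_lyndon_rotate {w : List X} (hp : Primitive w) :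
    ∃ i < w.length, IsLyndon (w.rotate i) := by
  have hl : 0 < w.length := hp.length_pos
  set T : Finset (List X) := (Finset.range w.length).image (w.rotate ·) with hT
  have hne : T.Nonempty := ⟨w.rotate 0, Finset.mem_image.mpr ⟨0, Finset.mem_range.mpr hl, rfl⟩⟩
  obtain ⟨i, hi, hv⟩ := Finset.mem_image.mp (T.min'_mem hne)
  rw [Finset.mem_range] at hi
  refine ⟨i, hi, ?_⟩
  rw [isLyndon_iff]
  have hprim : Primitive (w.rotate i) := hp.rotate i
  refine ⟨hprim.1, fun k hk hkl => ?_⟩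
  rw [List.length_rotate] at hkl
  have hmem : (w.rotate i).rotate k ∈ T := by
    rw [List.rotate_rotate, ← List.rotate_mod]
    exact Finset.mem_image.mpr ⟨_, Finset.mem_range.mpr (Nat.mod_lt _ hl), rfl⟩
  have hle : w.rotate i ≤ (w.rotate i).rotate k := by
    conv_lhs => rw [hv]
    exact T.min'_le _ hmem
  have hneq : (w.rotate i).rotate k ≠ w.rotate i := by
    have := hprim.2 k hk (by rw [List.length_rotate]; exact hkl)
    exact this
  exact lt_of_le_of_ne hle (fun hc => hneq hc.symm)

/-! ### Minimal period -/

attribute [local instance] Classical.propDecidable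

lemma per_exists {α : Type*} (w : List α) : ∃ k, 0 < k ∧ w.rotate k = w := by
  rcases eq_or_ne w [] with rfl | hw
  · exact ⟨1, one_pos, by simp⟩
  · exact ⟨w.length, List.length_pos_iff.mpr hw, List.rotate_length w⟩

noncomputable def per {α : Type*} (w : List α) : ℕ := Nat.find (per_exists w)

lemma per_pos {α : Type*} (w : List α) : 0 < per w := (Nat.find_spec (per_exists w)).1

lemma rotate_per {α : Type*} (w : List α) : w.rotate (per w) = w :=
  (Nat.find_spec (per_exists w)).2

lemma per_le {α : Type*} {w : List α} {k : ℕ} (hk : 0 < k) (h : w.rotate k = w) :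
    per w ≤ k := Nat.find_le ⟨hk, h⟩

lemma rotate_mod_per {α : Type*} (w : List α) :
    ∀ k : ℕ, w.rotate k = w → w.rotate (k % per w) = w := by
  intro k
  induction k using Nat.strong_induction_on with
  | _ k ih =>
    intro h
    rcases Nat.lt_or_ge k (per w) with hlt | hge
    · rwa [Nat.mod_eq_of_lt hlt]
    · have hp := per_pos w
      have h' : w.rotate (k - per w) = w := by
        have e : per w + (k - per w) = k := by omega
        have h2 := List.rotate_rotate w (per w) (k - per w)
        rw [rotate_per w, e, h] at h2
        exact h2
      have hih := ih (k - per w) (by omega) h'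
      have e : (k - per w) % per w = k % per w := by
        conv_rhs => rw [← Nat.sub_add_cancel hge, Nat.add_mod_right]
      rwa [e] at hih

lemma per_dvd {α : Type*} {w : List α} {k : ℕ} (h : w.rotate k = w) : per w ∣ k := by
  have hs := rotate_mod_per w k h
  by_contra hnd
  have h0 : k % per w ≠ 0 := fun hc => hnd (Nat.dvd_of_mod_eq_zero hc)
  have h1 := per_le (Nat.pos_of_ne_zero h0) hs
  have h2 := Nat.mod_lt k (per_pos w)
  omega

lemma per_dvd_length {α : Type*} {w : List α} (hw : w ≠ []) : per w ∣ w.length :=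
  per_dvd (List.rotate_length w)

lemma per_le_length {α : Type*} {w : List α} (hw : w ≠ []) : per w ≤ w.length :=
  Nat.le_of_dvd (List.length_pos_iff.mpr hw) (per_dvd_length hw)

lemma eq_pw_root {α : Type*} : ∀ (m : ℕ) (w : List α) (p : ℕ), 0 < p →
    w.length = m * p → w.rotate p = w → w = pw (w.take p) m := by
  intro m
  induction m with
  | zero =>
    intro w p hp hl _
    simp only [Nat.zero_mul] at hl
    rw [List.eq_nil_of_length_eq_zero hl]
    rfl
  | succ m ih =>
    intro w p hp hl hrot
    have hple : p ≤ w.length := by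
      rw [hl]; exact Nat.le_mul_of_pos_left p (by omega)
    set u := w.take p with hu
    set v := w.drop p with hv
    have hlu : u.length = p := by rw [hu, List.length_take]; omega
    have hlv : v.length = m * p := by
      rw [hv, List.length_drop, hl, Nat.succ_mul, Nat.add_sub_cancel]
    have hs : u ++ v = w := List.take_append_drop p w
    have hrot' : v ++ u = w := by
      rw [List.rotate_eq_drop_append_take hple] at hrot
      exact hrot
    rcases Nat.eq_zero_or_pos m with rfl | hm
    · have : v = [] := List.eq_nil_of_length_eq_zero (by omega)
      rw [pw_succ, pw_zero, List.append_nil, ← hs, this, List.append_nil]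
    · have hpv : p ≤ v.length := by nlinarith
      have huv : u ++ v = v ++ u := hs.trans hrot'.symm
      have htv : v.take p = u := by
        have := congrArg (List.take p) huv
        rw [List.take_append, List.take_append] at this
        have e1 : p - u.length = 0 := by omega
        have e2 : p - v.length = 0 := by omega
        rw [e1, e2, List.take_zero, List.take_zero, List.append_nil, List.append_nil,
          List.take_of_length_le (le_of_eq hlu)] at this
        exact this.symm
      have hdv : v.drop p ++ u = v := by
        have := congrArg (List.drop p) huv
        rw [List.drop_append, List.drop_append] at this
        have e1 : p - u.length = 0 := by omega
        have e2 : p - v.length = 0 := by omega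
        rw [e1, e2, List.drop_zero, List.drop_zero,
          List.drop_of_length_le (le_of_eq hlu)] at this
        simp only [List.nil_append] at this
        exact this.symm
      have hvrot : v.rotate p = v := by
        rw [List.rotate_eq_drop_append_take hpv, htv]
        exact hdv
      have hind := ih v p hp hlv hvrot
      rw [htv] at hind
      rw [← hs, hind]
      rfl

lemma root_spec {α : Type*} {w : List α} (hw : w ≠ []) :
    w = pw (w.take (per w)) (w.length / per w) := by
  have hp := per_pos w
  have hd := per_dvd_length hw
  exact eq_pw_root _ w (per w) hp (by rw [Nat.div_mul_cancel hd]) (rotate_per w)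

lemma primitive_take_per {α : Type*} {w : List α} (hw : w ≠ []) :
    Primitive (w.take (per w)) := by
  have hp := per_pos w
  have hle := per_le_length hw
  set u := w.take (per w) with hu
  have hlu : u.length = per w := by rw [hu, List.length_take]; omega
  refine ⟨by rw [← List.length_pos_iff]; omega, fun k hk hkl heq => ?_⟩
  rw [hlu] at hkl
  have hw' : w.rotate k = w := by
    conv_lhs => rw [root_spec hw, ← hu]
    conv_rhs => rw [root_spec hw, ← hu]
    rw [rotate_pw u (by omega) _, heq]
  exact absurd (per_le hk hw') (by omega)

lemma per_pw {α : Type*} {u : List α} (hu : Primitive u) {m : ℕ} (hm : 0 < m) :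
    per (pw u m) = u.length := by
  have hlu : 0 < u.length := hu.length_pos
  set w := pw u m with hw
  have hwne : w ≠ [] := by
    rw [← List.length_pos_iff, hw, length_pw]
    positivity
  have hrotu : w.rotate u.length = w := by
    rw [hw, rotate_pw u le_rfl, List.rotate_length]
  have hle : per w ≤ u.length := per_le hlu hrotu
  rcases eq_or_lt_of_le hle with heq | hlt
  · exact heq
  · exfalso
    set p := per w with hp
    have hppos : 0 < p := per_pos w
    have hpd : p ∣ u.length := per_dvd hrotu
    have hlw : w.length = m * u.length := by rw [hw, length_pw]
    have hup : w.take u.length = u := by rw [hw, take_length_pw u hm]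
    set u' := w.take p with hu'
    have hlu' : u'.length = p := by
      rw [hu', List.length_take]
      have : p ≤ w.length := per_le_length hwne
      omega
    have hroot : w = pw u' (w.length / p) := root_spec hwne
    obtain ⟨j, hj⟩ := hpd
    have hj2 : 2 ≤ j := by
      rcases Nat.lt_or_ge j 2 with hc | hc
      · exfalso
        have hb : p * j ≤ p * 1 := Nat.mul_le_mul_left p (by omega)
        rw [Nat.mul_one] at hb
        omega
      · exact hc
    have hjle : j ≤ w.length / p := by
      rw [Nat.le_div_iff_mul_le hppos, hlw]
      nlinarith
    have hu_pw : u = pw u' j := by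
      rw [← hup]
      conv_lhs => rw [hroot]
      rw [← take_pw u' hjle]
      congr 1
      rw [hlu', hj, Nat.mul_comm]
    have : u.rotate p = u := by
      rw [hu_pw, ← hlu', rotate_pw u' le_rfl, List.rotate_length]
    exact hu.2 p hppos hlt this

/-! ### Counting words -/

lemma sum_map_rotate (deg : X → ℕ) (w : List X) (k : ℕ) :
    ((w.rotate k).map deg).sum = (w.map deg).sum :=
  ((List.rotate_perm w k).map deg).sum_eq

lemma length_le_sum_map (deg : X → ℕ) (hdeg : ∀ x, 1 ≤ deg x) (w : List X) :
    w.length ≤ (w.map deg).sum := by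
  induction w with
  | nil => simp
  | cons x w ih =>
    have := hdeg x
    simp only [List.length_cons, List.map_cons, List.sum_cons]
    omega

section counting

variable (deg : X → ℕ) (hfin : ∀ n : ℕ, 1 ≤ n → {x : X | deg x = n}.Finite)

noncomputable def lvl (k : ℕ) : Finset X :=
  if h : 1 ≤ k then (hfin k h).toFinset else ∅

lemma mem_lvl {k : ℕ} (hk : 1 ≤ k) {x : X} : x ∈ lvl deg hfin k ↔ deg x = k := by
  rw [lvl, dif_pos hk, Set.Finite.mem_toFinset]
  rfl

noncomputable def wordsOn : List ℕ → Finset (List X)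
  | [] => {[]}
  | k :: bs => ((lvl deg hfin k) ×ˢ wordsOn bs).image fun p => p.1 :: p.2

lemma mem_wordsOn : ∀ {bs : List ℕ}, (∀ k ∈ bs, 1 ≤ k) → ∀ {w : List X},
    (w ∈ wordsOn deg hfin bs ↔ w.map deg = bs)
  | [], _, w => by simp [wordsOn, List.map_eq_nil_iff]
  | k :: bs, hbs, w => by
    have hk : 1 ≤ k := hbs k (by simp)
    have hbs' : ∀ j ∈ bs, 1 ≤ j := fun j hj => hbs j (by simp [hj])
    simp only [wordsOn, Finset.mem_image, Finset.mem_product]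
    constructor
    · rintro ⟨⟨x, w'⟩, ⟨hx, hw'⟩, rfl⟩
      rw [mem_lvl deg hfin hk] at hx
      rw [mem_wordsOn hbs'] at hw'
      simp [hx, hw']
    · intro h
      cases w with
      | nil => simp at h
      | cons x w' =>
        simp only [List.map_cons, List.cons.injEq] at h
        exact ⟨(x, w'), ⟨(mem_lvl deg hfin hk).mpr h.1,
          (mem_wordsOn hbs').mpr h.2⟩, rfl⟩

variable (a : ℕ → ℕ) (hcard : ∀ n : ℕ, 1 ≤ n → {x : X | deg x = n}.ncard = a n)

include hcard in
lemma card_lvl {k : ℕ} (hk : 1 ≤ k) : (lvl deg hfin k).card = a k := by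
  rw [lvl, dif_pos hk, ← Set.ncard_eq_toFinset_card _ (hfin k hk), hcard k hk]

include hcard in
lemma card_wordsOn : ∀ {bs : List ℕ}, (∀ k ∈ bs, 1 ≤ k) →
    (wordsOn deg hfin bs).card = (bs.map a).prod
  | [], _ => by simp [wordsOn]
  | k :: bs, hbs => by
    have hk : 1 ≤ k := hbs k (by simp)
    have hbs' : ∀ j ∈ bs, 1 ≤ j := fun j hj => hbs j (by simp [hj])
    have hinj : Function.Injective (fun p : X × List X => p.1 :: p.2) := by
      rintro ⟨x, u⟩ ⟨y, v⟩ h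
      simpa using h
    rw [wordsOn, Finset.card_image_of_injective _ hinj, Finset.card_product,
      card_lvl deg hfin a hcard hk, card_wordsOn hbs']
    simp

noncomputable def words (n : ℕ) : Finset (List X) :=
  Finset.univ.biUnion fun β : Composition n => wordsOn deg hfin β.blocks

variable (hdeg : ∀ x, 1 ≤ deg x)

include hdeg in
lemma mem_words {n : ℕ} {w : List X} :
    w ∈ words deg hfin n ↔ (w.map deg).sum = n := by
  simp only [words, Finset.mem_biUnion, Finset.mem_univ, true_and]
  constructor
  · rintro ⟨β, hβ⟩
    rw [mem_wordsOn deg hfin (fun k hk => β.blocks_pos hk)] at hβ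
    rw [hβ, β.blocks_sum]
  · intro h
    have hpos : ∀ i ∈ w.map deg, 0 < i := by
      intro i hi
      obtain ⟨x, _, rfl⟩ := List.mem_map.mp hi
      exact hdeg x
    exact ⟨⟨w.map deg, fun hi => hpos _ hi, h⟩,
      (mem_wordsOn deg hfin (fun k hk => hpos k hk)).mpr rfl⟩

include hdeg in
lemma ne_nil_of_mem_words {n : ℕ} (hn : 1 ≤ n) {w : List X}
    (hw : w ∈ words deg hfin n) : w ≠ [] := by
  rw [mem_words deg hfin hdeg] at hw
  intro h
  rw [h] at hw
  simp at hw
  omega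

noncomputable def lynd (n : ℕ) : Finset (List X) :=
  (words deg hfin n).filter (fun w => IsLyndon w)

noncomputable def prim (n : ℕ) : Finset (List X) :=
  (words deg hfin n).filter (fun w => Primitive w)

include hcard in
lemma sum_inv_length (n : ℕ) :
    ∑ w ∈ words deg hfin n, (1 : ℚ) / (w.length : ℚ)
      = ∑ β : Composition n, ((β.blocks.map fun k => ((a k : ℕ) : ℚ)).prod / (β.length : ℚ)) := by
  rw [words, Finset.sum_biUnion]
  · apply Finset.sum_congr rfl
    intro β _
    have hpos : ∀ k ∈ β.blocks, 1 ≤ k := fun k hk => β.blocks_pos hk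
    have hlen : ∀ w ∈ wordsOn deg hfin β.blocks, w.length = β.length := by
      intro w hw
      rw [mem_wordsOn deg hfin hpos] at hw
      rw [← β.blocks_length, ← hw, List.length_map]
    rw [Finset.sum_congr rfl (fun w hw => by rw [hlen w hw]), Finset.sum_const,
      card_wordsOn deg hfin a hcard hpos, nsmul_eq_mul]
    rw [Nat.cast_list_prod, List.map_map]
    rw [mul_one_div]
    rfl
  · intro β _ γ _ hne
    simp only [Function.onFun]
    rw [Finset.disjoint_left]
    intro w hwβ hwγ
    rw [mem_wordsOn deg hfin (fun k hk => β.blocks_pos hk)] at hwβ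
    rw [mem_wordsOn deg hfin (fun k hk => γ.blocks_pos hk)] at hwγ
    exact hne (by ext1; rw [← hwβ, ← hwγ])

lemma rotate_sub_length {α' : Type*} {u : List α'} (hl : 0 < u.length) {i : ℕ} (hi : i < u.length) :
    (u.rotate i).rotate ((u.length - i) % u.length) = u := by
  rw [List.rotate_rotate, ← List.rotate_mod]
  rcases Nat.eq_zero_or_pos i with rfl | hip
  · simp [Nat.mod_self]
  · have h1 : (u.length - i) % u.length = u.length - i := Nat.mod_eq_of_lt (by omega)
    rw [h1]
    have h2 : i + (u.length - i) = u.length := by omega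
    rw [h2, Nat.mod_self, List.rotate_zero]

include hdeg in
lemma prim_eq_biUnion (n : ℕ) :
    prim deg hfin n =
      (lynd deg hfin n).biUnion (fun v => (Finset.range v.length).image (v.rotate ·)) := by
  ext u
  simp only [prim, lynd, Finset.mem_filter, Finset.mem_biUnion, Finset.mem_image,
    Finset.mem_range]
  constructor
  · rintro ⟨hu, hprim⟩
    obtain ⟨i, hi, hLyn⟩ := exists_lyndon_rotate hprim
    have hl : 0 < u.length := hprim.length_pos
    refine ⟨u.rotate i, ⟨⟨?_, hLyn⟩, ?_⟩⟩
    · rw [mem_words deg hfin hdeg] at hu ⊢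
      rw [sum_map_rotate, hu]
    · refine ⟨(u.length - i) % u.length, ?_, rotate_sub_length hl hi⟩
      rw [List.length_rotate]
      exact Nat.mod_lt _ hl
  · rintro ⟨v, ⟨⟨hv, hLyn⟩, j, hj, rfl⟩⟩
    constructor
    · rw [mem_words deg hfin hdeg] at hv ⊢
      rw [sum_map_rotate, hv]
    · exact (lyndon_primitive hLyn).rotate j

include hdeg in
lemma sum_prim (n : ℕ) (c : ℚ) :
    ∑ u ∈ prim deg hfin n, c / (u.length : ℚ) = c * (lynd deg hfin n).card := by
  have hdisj : Set.PairwiseDisjoint (↑(lynd deg hfin n))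
      (fun v : List X => (Finset.range v.length).image (v.rotate ·)) := by
    intro v hv v' hv' hne
    simp only [Finset.coe_filter, Set.mem_setOf_eq, lynd, Finset.mem_coe,
      Finset.mem_filter] at hv hv'
    rw [Function.onFun, Finset.disjoint_left]
    rintro u hu hu'
    obtain ⟨i, hi, rfl⟩ := Finset.mem_image.mp hu
    obtain ⟨j, hj, hj'⟩ := Finset.mem_image.mp hu'
    rw [Finset.mem_range] at hi hj
    have hlv' : 0 < v'.length := List.length_pos_iff.mpr hv'.2.1
    have hrot : v.rotate (i + (v'.length - j) % v'.length) = v' := by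
      rw [← List.rotate_rotate, ← hj']
      exact rotate_sub_length hlv' hj
    exact hne (lyndon_eq_of_rotate hv.2 hv'.2 hrot)
  rw [prim_eq_biUnion deg hfin hdeg n, Finset.sum_biUnion hdisj]
  have hin : ∀ v ∈ lynd deg hfin n,
      ∑ u ∈ (Finset.range v.length).image (v.rotate ·), c / (u.length : ℚ) = c := by
    intro v hv
    have hLyn : IsLyndon v := (Finset.mem_filter.mp hv).2
    have hprim : Primitive v := lyndon_primitive hLyn
    have hlv : 0 < v.length := hprim.length_pos
    rw [Finset.sum_image (fun i hi j hj hij => hprim.eq_of_rotate_eq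
      (Finset.mem_range.mp hi) (Finset.mem_range.mp hj) hij)]
    have : ∀ i ∈ Finset.range v.length, c / (((v.rotate i).length : ℕ) : ℚ) = c / v.length := by
      intro i _
      rw [List.length_rotate]
    rw [Finset.sum_congr rfl this, Finset.sum_const, Finset.card_range, nsmul_eq_mul]
    have : (v.length : ℚ) ≠ 0 := by positivity
    field_simp
  rw [Finset.sum_congr rfl hin, Finset.sum_const, nsmul_eq_mul, mul_comm]

include hdeg in
lemma words_eq_biUnion {n : ℕ} (hn : 1 ≤ n) :
    words deg hfin n = n.divisors.biUnion
      (fun e => (prim deg hfin e).image (fun u => pw u (n / e))) := by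
  ext w
  simp only [Finset.mem_biUnion, Nat.mem_divisors, Finset.mem_image]
  constructor
  · intro hw
    have hwne : w ≠ [] := ne_nil_of_mem_words deg hfin hdeg hn hw
    have hD : (w.map deg).sum = n := (mem_words deg hfin hdeg).mp hw
    have hppos : 0 < per w := per_pos w
    have hdl : per w ∣ w.length := per_dvd_length hwne
    have hmp : w.length / per w * per w = w.length := Nat.div_mul_cancel hdl
    have hroot : w = pw (w.take (per w)) (w.length / per w) := root_spec hwne
    have hprim : Primitive (w.take (per w)) := primitive_take_per hwne
    set u := w.take (per w) with hu
    set m := w.length / per w with hm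
    set e := (u.map deg).sum with he
    have hn_me : n = m * e := by
      conv_lhs => rw [← hD, hroot, sum_map_pw]
    have hepos : 0 < e :=
      lt_of_lt_of_le (List.length_pos_iff.mpr hprim.1) (length_le_sum_map deg hdeg u)
    have hmpos : 0 < m := by
      rcases Nat.eq_zero_or_pos m with h0 | h
      · rw [h0, Nat.zero_mul] at hn_me; omega
      · exact h
    have hne : n / e = m := by
      rw [hn_me, Nat.mul_div_cancel m hepos]
    refine ⟨e, ⟨⟨m, by rw [hn_me, Nat.mul_comm]⟩, by omega⟩, u, ?_, ?_⟩
    · rw [prim, Finset.mem_filter]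
      exact ⟨(mem_words deg hfin hdeg).mpr rfl, hprim⟩
    · rw [hne, ← hroot]
  · rintro ⟨e, ⟨hdvd, hn0⟩, u, hu, rfl⟩
    rw [prim, Finset.mem_filter] at hu
    rw [mem_words deg hfin hdeg, sum_map_pw, (mem_words deg hfin hdeg).mp hu.1,
      Nat.div_mul_cancel hdvd]

include hdeg in
lemma sum_key {n : ℕ} (hn : 1 ≤ n) :
    ∑ w ∈ words deg hfin n, (n : ℚ) / (w.length : ℚ)
      = ∑ e ∈ n.divisors, (e : ℚ) * (lynd deg hfin e).card := by
  have hdisj : Set.PairwiseDisjoint (↑n.divisors)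
      (fun e => (prim deg hfin e).image (fun u => pw u (n / e))) := by
    intro e he e' he' hne
    rw [Finset.mem_coe, Nat.mem_divisors] at he he'
    rw [Function.onFun, Finset.disjoint_left]
    rintro w hw hw'
    obtain ⟨u, hu, rfl⟩ := Finset.mem_image.mp hw
    obtain ⟨u', hu', heq⟩ := Finset.mem_image.mp hw'
    rw [prim, Finset.mem_filter] at hu hu'
    have hM : 0 < n / e := Nat.div_pos (Nat.le_of_dvd (by omega) he.1)
      (Nat.pos_of_dvd_of_pos he.1 (by omega))
    have hM' : 0 < n / e' := Nat.div_pos (Nat.le_of_dvd (by omega) he'.1)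
      (Nat.pos_of_dvd_of_pos he'.1 (by omega))
    have hper : per (pw u (n / e)) = u.length := per_pw hu.2 hM
    have hper' : per (pw u' (n / e')) = u'.length := per_pw hu'.2 hM'
    have hlen : u.length = u'.length := by
      rw [← hper, ← hper', heq]
    have huu : u = u' := by
      have t1 : (pw u (n / e)).take u.length = u := take_length_pw u hM
      have t2 : (pw u' (n / e')).take u'.length = u' := take_length_pw u' hM'
      rw [← t1, ← t2, ← hlen, heq]
    apply hne
    rw [← (mem_words deg hfin hdeg).mp hu.1, ← (mem_words deg hfin hdeg).mp hu'.1, huu]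
  rw [words_eq_biUnion deg hfin hdeg hn, Finset.sum_biUnion hdisj]
  apply Finset.sum_congr rfl
  intro e he
  obtain ⟨hdvd, hn0⟩ := Nat.mem_divisors.mp he
  have hepos : 0 < e := Nat.pos_of_dvd_of_pos hdvd (by omega)
  have hM : 0 < n / e := Nat.div_pos (Nat.le_of_dvd (by omega) hdvd) hepos
  have hinj : ∀ u ∈ prim deg hfin e, ∀ u' ∈ prim deg hfin e,
      pw u (n / e) = pw u' (n / e) → u = u' := by
    intro u hu u' hu' heq
    have hlen : u.length = u'.length := by
      have := congrArg List.length heq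
      rw [length_pw, length_pw] at this
      exact Nat.eq_of_mul_eq_mul_left hM this
    have t1 : (pw u (n / e)).take u.length = u := take_length_pw u hM
    have t2 : (pw u' (n / e)).take u'.length = u' := take_length_pw u' hM
    rw [← t1, ← t2, ← hlen, heq]
  rw [Finset.sum_image hinj]
  have hterm : ∀ u ∈ prim deg hfin e,
      (n : ℚ) / (((pw u (n / e)).length : ℕ) : ℚ) = (e : ℚ) / (u.length : ℚ) := by
    intro u hu
    rw [prim, Finset.mem_filter] at hu
    have hlu : 0 < u.length := hu.2.length_pos
    rw [length_pw]
    have hcast : (n : ℚ) = ((n / e : ℕ) : ℚ) * (e : ℚ) := by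
      rw [← Nat.cast_mul, Nat.div_mul_cancel hdvd]
    rw [hcast, Nat.cast_mul]
    rw [mul_div_mul_left _ _ (by positivity : ((n / e : ℕ) : ℚ) ≠ 0)]
  rw [Finset.sum_congr rfl hterm, sum_prim deg hfin hdeg e (e : ℚ)]

end counting

end Stmt10

/-- Let `X` be a linearly ordered graded set with finite graded pieces of
cardinalities `a n`. Then for every `n ≥ 1` the set of Lyndon words over `X` of degree
`n` is finite and its cardinality equals
`(1/n) Σ_{d | n} d μ(n/d) Σ_{β ⊨ d} a_β / ℓ(β)`. -/
theorem stmt_10 {X : Type*} [LinearOrder X] (deg : X → ℕ) (hdeg : ∀ x, 1 ≤ deg x)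
    (a : ℕ → ℕ)
    (hfin : ∀ n : ℕ, 1 ≤ n → {x : X | deg x = n}.Finite)
    (hcard : ∀ n : ℕ, 1 ≤ n → {x : X | deg x = n}.ncard = a n) :
    ∀ n : ℕ, 1 ≤ n →
      {w : List X | (w.map deg).sum = n ∧ IsLyndon w}.Finite ∧
      (({w : List X | (w.map deg).sum = n ∧ IsLyndon w}.ncard : ℚ))
        = (1 / (n : ℚ)) *
            ∑ d ∈ n.divisors, (d : ℚ) * ((ArithmeticFunction.moebius (n / d) : ℤ) : ℚ) *
              ∑ β : Composition d,
                (β.blocks.map (fun k => (a k : ℚ))).prod / (β.length : ℚ) := by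
  intro n hn
  have hset : {w : List X | (w.map deg).sum = n ∧ IsLyndon w} = ↑(Stmt10.lynd deg hfin n) := by
    ext w
    simp only [Set.mem_setOf_eq, Stmt10.lynd, Finset.coe_filter, Finset.mem_filter,
      Stmt10.mem_words deg hfin hdeg]
  constructor
  · rw [hset]
    exact (Stmt10.lynd deg hfin n).finite_toSet
  · rw [hset, Set.ncard_coe_finset]
    have hFG : ∀ (d : ℕ), d > 0 → ∑ i ∈ d.divisors,
        ((i : ℚ) * ((Stmt10.lynd deg hfin i).card : ℚ))
        = (d : ℚ) * ∑ β : Composition d,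
            (β.blocks.map (fun k => (a k : ℚ))).prod / (β.length : ℚ) := by
      intro d hd
      rw [← Stmt10.sum_key deg hfin hdeg hd]
      have hc : ∀ w ∈ Stmt10.words deg hfin d,
          (d : ℚ) / (w.length : ℚ) = (d : ℚ) * ((1 : ℚ) / (w.length : ℚ)) :=
        fun w _ => by rw [mul_one_div]
      rw [Finset.sum_congr rfl hc, ← Finset.mul_sum,
        Stmt10.sum_inv_length deg hfin a hcard d]
    have hinv := ArithmeticFunction.sum_eq_iff_sum_smul_moebius_eq.mp hFG n (by omega)
    have h2 : ∑ x ∈ n.divisorsAntidiagonal,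
        (ArithmeticFunction.moebius x.1) • ((x.2 : ℚ) * ∑ β : Composition x.2,
          (β.blocks.map (fun k => (a k : ℚ))).prod / (β.length : ℚ))
        = ∑ d ∈ n.divisors,
        (ArithmeticFunction.moebius (n / d)) • ((d : ℚ) * ∑ β : Composition d,
          (β.blocks.map (fun k => (a k : ℚ))).prod / (β.length : ℚ)) :=
      Nat.sum_divisorsAntidiagonal' (f := fun x y =>
        (ArithmeticFunction.moebius x) • ((y : ℚ) * ∑ β : Composition y,
          (β.blocks.map (fun k => (a k : ℚ))).prod / (β.length : ℚ)))
    rw [h2] at hinv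
    have hkey : (n : ℚ) * ((Stmt10.lynd deg hfin n).card : ℚ)
        = ∑ d ∈ n.divisors, (d : ℚ) * ((ArithmeticFunction.moebius (n / d) : ℤ) : ℚ) *
            ∑ β : Composition d,
              (β.blocks.map (fun k => (a k : ℚ))).prod / (β.length : ℚ) := by
      rw [← hinv]
      apply Finset.sum_congr rfl
      intro d _
      rw [zsmul_eq_mul]
      ring
    have hn0 : (n : ℚ) ≠ 0 := by
      have : (0 : ℚ) < (n : ℚ) := by exact_mod_cast Nat.lt_of_lt_of_le Nat.zero_lt_one hn
      exact ne_of_gt this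
    rw [← hkey]
    field_simp
end

section
/- Let (a_n)_{n≥1} be a sequence of natural numbers. For each n ≥ 1 define h_n = Σ_{β ⊨ n} a_β (sum over compositions β of n) and the rational number p_n = (1/n) · Σ_{d | n} d · μ(n/d) · Σ_{β ⊨ d} a_β / ℓ(β). Then for every n ≥ 1, the inequalities h_n ≥ p_n ≥ a_n ≥ 0 hold (as rational numbers). -/
namespace Stmt11Aux

open List

variable {α : Type*}

def nrep (m : ℕ) (u : List α) : List α := (List.replicate m u).flatten

@[simp] lemma nrep_zero (u : List α) : nrep 0 u = [] := rfl

@[simp] lemma nrep_succ (m : ℕ) (u : List α) : nrep (m+1) u = u ++ nrep m u := by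
  simp [nrep, List.replicate_succ]

@[simp] lemma nrep_one (u : List α) : nrep 1 u = u := by simp

@[simp] lemma nrep_length (m : ℕ) (u : List α) : (nrep m u).length = m * u.length := by
  induction m with
  | zero => simp
  | succ m ih => simp [ih, Nat.succ_mul, Nat.add_comm]

lemma nrep_append_self (m : ℕ) (u : List α) : nrep m u ++ u = u ++ nrep m u := by
  induction m with
  | zero => simp
  | succ m ih => simp only [nrep_succ, List.append_assoc, ih]

lemma nrep_succ' (m : ℕ) (u : List α) : nrep (m+1) u = nrep m u ++ u := by
  rw [nrep_append_self, nrep_succ]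

lemma nrep_sandwich (m : ℕ) (x y : List α) :
    nrep (m+1) (x ++ y) = x ++ (nrep m (y ++ x) ++ y) := by
  induction m with
  | zero => simp
  | succ m ih =>
    rw [nrep_succ, ih]
    simp only [nrep_succ, List.append_assoc]

lemma map_nrep {β : Type*} (f : α → β) (m : ℕ) (u : List α) :
    (nrep m u).map f = nrep m (u.map f) := by
  induction m with
  | zero => simp
  | succ m ih => simp [ih]

lemma mem_nrep {x : α} {m : ℕ} {u : List α} (hx : x ∈ nrep m u) : x ∈ u := by
  induction m with
  | zero => simp at hx
  | succ m ih => rcases List.mem_append.1 (by simpa using hx) with h | h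
                 · exact h
                 · exact ih h

lemma sum_nrep (m : ℕ) (u : List ℕ) : (nrep m u).sum = m * u.sum := by
  induction m with
  | zero => simp
  | succ m ih => simp [ih, Nat.succ_mul, Nat.add_comm]

lemma rotate_nrep_aux (m : ℕ) (x y : List α) :
    (nrep (m+1) (x ++ y)).rotate x.length = nrep (m+1) (y ++ x) := by
  rw [nrep_sandwich, List.rotate_append_length_eq, List.append_assoc, ← nrep_succ']

lemma rotate_nrep (m t : ℕ) (u : List α) (ht : t ≤ u.length) :
    (nrep m u).rotate t = nrep m (u.rotate t) := by
  cases m with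
  | zero => simp
  | succ m =>
    have h := rotate_nrep_aux m (u.take t) (u.drop t)
    rw [List.take_append_drop, List.length_take, min_eq_left ht] at h
    rw [h, List.rotate_eq_drop_append_take ht]

lemma take_nrep (j m : ℕ) (u : List α) (hj : j ≤ m) :
    (nrep m u).take (j * u.length) = nrep j u := by
  induction j generalizing m with
  | zero => simp
  | succ j ih =>
    cases m with
    | zero => omega
    | succ m =>
      rw [nrep_succ, nrep_succ, Nat.succ_mul, Nat.add_comm, List.take_length_add_append,
        ih m (by omega)]

section Period

variable [DecidableEq α]

lemma exists_per (w : List α) (hw : w ≠ []) : ∃ r, 0 < r ∧ w.rotate r = w :=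
  ⟨w.length, List.length_pos_iff.2 hw, List.rotate_length w⟩

/-- minimal period of a nonempty list -/
def minPer (w : List α) : ℕ :=
  if hw : w ≠ [] then Nat.find (exists_per w hw) else 0

variable {w : List α}

lemma minPer_pos (hw : w ≠ []) : 0 < minPer w := by
  rw [minPer, dif_pos hw]; exact (Nat.find_spec (exists_per w hw)).1

lemma rotate_minPer (hw : w ≠ []) : w.rotate (minPer w) = w := by
  rw [minPer, dif_pos hw]; exact (Nat.find_spec (exists_per w hw)).2

lemma minPer_min (hw : w ≠ []) {r : ℕ} (hr : 0 < r) (hrot : w.rotate r = w) :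
    minPer w ≤ r := by
  rw [minPer, dif_pos hw]; exact Nat.find_min' _ ⟨hr, hrot⟩

lemma rotate_mul_minPer (hw : w ≠ []) (q : ℕ) : w.rotate (q * minPer w) = w := by
  induction q with
  | zero => simp
  | succ q ih =>
    rw [Nat.succ_mul, ← List.rotate_rotate, ih, rotate_minPer hw]

lemma minPer_dvd (hw : w ≠ []) {d : ℕ} (hrot : w.rotate d = w) : minPer w ∣ d := by
  have hp0 : 0 < minPer w := minPer_pos hw
  have h1 : w.rotate (minPer w * (d / minPer w)) = w := by
    rw [Nat.mul_comm]; exact rotate_mul_minPer hw _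
  have h2 : w.rotate (d % minPer w) = w := by
    have h3 : w.rotate (minPer w * (d / minPer w) + d % minPer w) = w := by
      rw [Nat.div_add_mod]; exact hrot
    rw [← List.rotate_rotate, h1] at h3; exact h3
  rcases Nat.eq_zero_or_pos (d % minPer w) with h | h
  · exact Nat.dvd_of_mod_eq_zero h
  · have := minPer_min hw h h2
    have := Nat.mod_lt d hp0
    omega

lemma minPer_le_length (hw : w ≠ []) : minPer w ≤ w.length :=
  minPer_min hw (List.length_pos_iff.2 hw) (List.rotate_length w)

lemma minPer_dvd_length (hw : w ≠ []) : minPer w ∣ w.length :=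
  minPer_dvd hw (List.rotate_length w)

lemma rotate_mod_minPer (hw : w ≠ []) (t : ℕ) :
    w.rotate t = w.rotate (t % minPer w) := by
  calc w.rotate t = w.rotate (minPer w * (t / minPer w) + t % minPer w) := by
        rw [Nat.div_add_mod]
    _ = (w.rotate (minPer w * (t / minPer w))).rotate (t % minPer w) :=
        (List.rotate_rotate w _ _).symm
    _ = w.rotate (t % minPer w) := by
        rw [Nat.mul_comm, rotate_mul_minPer hw]

lemma rotate_eq_rotate_iff (hw : w ≠ []) {i j : ℕ} (hi : i ≤ j) :
    w.rotate i = w.rotate j ↔ minPer w ∣ (j - i) := by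
  constructor
  · intro hij
    apply minPer_dvd hw
    have h : (w.rotate (j - i)).rotate i = w.rotate i := by
      rw [List.rotate_rotate, Nat.sub_add_cancel hi, ← hij]
    exact List.rotate_eq_rotate.1 h
  · rintro ⟨q, hq⟩
    have h : w.rotate (j - i) = w := by rw [hq, Nat.mul_comm]; exact rotate_mul_minPer hw q
    rw [show j = (j - i) + i by omega, ← List.rotate_rotate, h]

/-- a list with period `r` and length `m * r` is the `m`-fold repetition of its
`r`-prefix. -/
lemma eq_nrep_of_rotate (r : ℕ) (hr : 0 < r) :
    ∀ (m : ℕ) (w : List α), w.rotate r = w → w.length = m * r → w = nrep m (w.take r)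
  | 0, w, _, hlen => by
      have h : w = [] := List.length_eq_zero_iff.1 (by omega)
      simp [h]
  | (m+1), w, hrot, hlen => by
      have hK : w.length = m * r + r := by rw [hlen, Nat.succ_mul]
      have hrle : r ≤ w.length := by omega
      have hcomm : w.drop r ++ w.take r = w.take r ++ w.drop r := by
        conv_rhs => rw [List.take_append_drop]
        rw [← List.rotate_eq_drop_append_take hrle, hrot]
      cases m with
      | zero =>
        have h1 : w.take r = w := List.take_of_length_le (by omega)
        rw [nrep_one, h1]
      | succ m =>
        have hK2 : (m+1) * r = m * r + r := Nat.succ_mul m r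
        have hrv : r ≤ (w.drop r).length := by rw [List.length_drop]; omega
        have htakev : (w.drop r).take r = w.take r := by
          have h1 : (w.drop r ++ w.take r).take r = (w.drop r).take r :=
            List.take_append_of_le_length hrv
          have h2 : (w.take r ++ w.drop r).take r = w.take r := by
            rw [List.take_append_drop]
          rw [hcomm] at h1; rw [h1] at h2; exact h2
        have hdropv : (w.drop r).drop r ++ w.take r = w.drop r := by
          have h1 : (w.drop r ++ w.take r).drop r = (w.drop r).drop r ++ w.take r :=
            List.drop_append_of_le_length hrv
          have h2 : (w.take r ++ w.drop r).drop r = w.drop r := by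
            rw [List.take_append_drop]
          rw [hcomm] at h1; rw [h1] at h2; exact h2
        have hvrot : (w.drop r).rotate r = w.drop r := by
          rw [List.rotate_eq_drop_append_take hrv, htakev, hdropv]
        have hvlen : (w.drop r).length = (m+1) * r := by rw [List.length_drop]; omega
        have ihv := eq_nrep_of_rotate r hr (m+1) (w.drop r) hvrot hvlen
        rw [htakev] at ihv
        conv_lhs => rw [← List.take_append_drop r w, ihv]
        exact (nrep_succ (m+1) _).symm

end Period


open List
variable {α : Type*} [DecidableEq α] {w u : List α}

lemma nrep_add (m k : ℕ) (v : List α) : nrep (m + k) v = nrep m v ++ nrep k v := by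
  induction m with
  | zero => simp
  | succ m ih => rw [Nat.succ_add, nrep_succ, nrep_succ, ih, List.append_assoc]

lemma nrep_nrep (m k : ℕ) (v : List α) : nrep m (nrep k v) = nrep (m * k) v := by
  induction m with
  | zero => simp
  | succ m ih => rw [nrep_succ, ih, Nat.succ_mul, Nat.add_comm, nrep_add]

lemma rotate_of_length_eq {v : List α} {p : ℕ} (h : v.length = p) :
    v.rotate p = v := by subst h; exact List.rotate_length v

lemma rotate_nrep_length (m : ℕ) (v : List α) :
    (nrep m v).rotate v.length = nrep m v := by
  rw [rotate_nrep m _ v le_rfl, List.rotate_length]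

lemma nrep_ne_nil {m : ℕ} (hm : 0 < m) (hu : u ≠ []) : nrep m u ≠ [] := by
  intro h
  have := congrArg List.length h
  simp only [nrep_length, List.length_nil] at this
  rcases Nat.mul_eq_zero.1 this with h' | h'
  · omega
  · exact hu (List.length_eq_zero_iff.1 h')

/-- root decomposition -/
lemma root_spec (hw : w ≠ []) :
    w = nrep (w.length / minPer w) (w.take (minPer w)) :=
  eq_nrep_of_rotate (minPer w) (minPer_pos hw) _ w (rotate_minPer hw)
    (Nat.div_mul_cancel (minPer_dvd_length hw)).symm

lemma take_minPer_length (hw : w ≠ []) : (w.take (minPer w)).length = minPer w := by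
  rw [List.length_take, min_eq_left (minPer_le_length hw)]

lemma take_minPer_ne_nil (hw : w ≠ []) : w.take (minPer w) ≠ [] :=
  List.length_pos_iff.1 (by rw [take_minPer_length hw]; exact minPer_pos hw)

/-- the root of `w` is aperiodic -/
lemma minPer_take_minPer (hw : w ≠ []) :
    minPer (w.take (minPer w)) = minPer w := by
  have hune : w.take (minPer w) ≠ [] := take_minPer_ne_nil hw
  have hul : (w.take (minPer w)).length = minPer w := take_minPer_length hw
  have hrotu : (w.take (minPer w)).rotate (minPer w) = w.take (minPer w) :=
    rotate_of_length_eq hul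
  have hs : minPer (w.take (minPer w)) ∣ minPer w := minPer_dvd hune hrotu
  have hspos : 0 < minPer (w.take (minPer w)) := minPer_pos hune
  have hsle : minPer (w.take (minPer w)) ≤ minPer w := Nat.le_of_dvd (minPer_pos hw) hs
  have hvlen : ((w.take (minPer w)).take (minPer (w.take (minPer w)))).length
      = minPer (w.take (minPer w)) := take_minPer_length hune
  have hu2 := root_spec hune
  rw [hul] at hu2
  have hw2 : w = nrep (w.length / minPer w * (minPer w / minPer (w.take (minPer w))))
      ((w.take (minPer w)).take (minPer (w.take (minPer w)))) := by
    conv_lhs => rw [root_spec hw, hu2]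
    rw [nrep_nrep]
  have hwrot : w.rotate (minPer (w.take (minPer w))) = w := by
    have hv := rotate_nrep_length
      (w.length / minPer w * (minPer w / minPer (w.take (minPer w))))
      ((w.take (minPer w)).take (minPer (w.take (minPer w))))
    rw [hvlen, ← hw2] at hv
    exact hv
  exact Nat.dvd_antisymm hs (minPer_dvd hw hwrot)

/-- repetition of an aperiodic word has minimal period the length of the word -/
lemma minPer_nrep {m : ℕ} (hm : 0 < m) (hu : u ≠ []) (hap : minPer u = u.length) :
    minPer (nrep m u) = u.length := by
  have hwne : nrep m u ≠ [] := nrep_ne_nil hm hu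
  have hupos : 0 < u.length := List.length_pos_iff.2 hu
  have hrot : (nrep m u).rotate u.length = nrep m u := by
    rw [rotate_nrep m _ u le_rfl, List.rotate_length]
  have hs : minPer (nrep m u) ∣ u.length := minPer_dvd hwne hrot
  have hspos : 0 < minPer (nrep m u) := minPer_pos hwne
  have hsle : minPer (nrep m u) ≤ u.length := Nat.le_of_dvd hupos hs
  have htake : ∀ s, s ≤ u.length → (nrep m u).take s = u.take s := by
    intro s hle
    cases m with
    | zero => omega
    | succ m => rw [nrep_succ, List.take_append_of_le_length hle]
  have h1 : u = (nrep m u).take u.length := by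
    cases m with
    | zero => omega
    | succ m => rw [nrep_succ, List.take_left]
  have hroot := root_spec hwne
  rw [htake _ hsle] at hroot
  have hvlen : (u.take (minPer (nrep m u))).length = minPer (nrep m u) := by
    rw [List.length_take, min_eq_left hsle]
  have hju : u.length / minPer (nrep m u) ≤ (nrep m u).length / minPer (nrep m u) := by
    apply Nat.div_le_div_right
    rw [nrep_length]
    exact Nat.le_mul_of_pos_left _ hm
  have hlen_eq : u.length / minPer (nrep m u) * (u.take (minPer (nrep m u))).length
      = u.length := by rw [hvlen, Nat.div_mul_cancel hs]
  have hu2 : u = nrep (u.length / minPer (nrep m u)) (u.take (minPer (nrep m u))) := by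
    calc u = (nrep m u).take
          (u.length / minPer (nrep m u) * (u.take (minPer (nrep m u))).length) := by
            rw [hlen_eq]; exact h1
      _ = (nrep ((nrep m u).length / minPer (nrep m u))
            (u.take (minPer (nrep m u)))).take
          (u.length / minPer (nrep m u) * (u.take (minPer (nrep m u))).length) := by
            rw [← hroot]
      _ = nrep (u.length / minPer (nrep m u)) (u.take (minPer (nrep m u))) :=
            take_nrep _ _ _ hju
  have hurot : u.rotate (minPer (nrep m u)) = u := by
    have hv := rotate_nrep_length (u.length / minPer (nrep m u))
      (u.take (minPer (nrep m u)))
    rw [hvlen, ← hu2] at hv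
    exact hv
  have h2 := minPer_dvd hu hurot
  rw [hap] at h2
  exact Nat.dvd_antisymm hs h2

section Words

variable (a : ℕ → ℕ)

abbrev Ltr := Σ k : ℕ, Fin (a k)

def wsum (w : List (Ltr a)) : ℕ := (w.map Sigma.fst).sum

def WordOk (n : ℕ) (w : List (Ltr a)) : Prop :=
  wsum a w = n ∧ ∀ x ∈ w, 0 < x.1

def Word (n : ℕ) := {w : List (Ltr a) // WordOk a n w}

/-- colored compositions -/
abbrev CC (n : ℕ) := (β : Composition n) × (∀ i : Fin β.length, Fin (a (β.blocksFun i)))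

def toWord {n : ℕ} (x : CC a n) : Word a n :=
  ⟨List.ofFn (fun i => (⟨x.1.blocksFun i, x.2 i⟩ : Ltr a)),
   by
    simp only [wsum, List.map_ofFn]
    show (List.ofFn fun i => x.1.blocksFun i).sum = n
    rw [List.sum_ofFn, x.1.sum_blocksFun],
   by
    intro y hy
    rw [List.mem_ofFn] at hy
    obtain ⟨i, rfl⟩ := hy
    exact x.1.one_le_blocksFun i⟩

lemma sigma_cast_eq {k k' : ℕ} (h : k = k') (v : Fin (a k)) :
    (⟨k', Fin.cast (congrArg a h) v⟩ : Ltr a) = ⟨k, v⟩ := by subst h; rfl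

lemma toWord_bijective {n : ℕ} : Function.Bijective (toWord a (n := n)) := by
  constructor
  · rintro ⟨β, c⟩ ⟨γ, d⟩ hxy
    have hval := congrArg Subtype.val hxy
    simp only [toWord] at hval
    have hfst : β.blocks = γ.blocks := by
      have := congrArg (List.map Sigma.fst) hval
      simp only [List.map_ofFn] at this
      have h2 : List.ofFn β.blocksFun = List.ofFn γ.blocksFun := this
      rw [β.ofFn_blocksFun, γ.ofFn_blocksFun] at h2
      exact h2
    obtain rfl : β = γ := by
      cases β; cases γ; cases hfst; rfl
    congr 1
    funext i
    have h3 := List.ofFn_injective hval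
    have h4 := congrFun h3 i
    simpa using h4
  · rintro ⟨l, hsum, hpos⟩
    have hblkpos : ∀ i ∈ l.map Sigma.fst, 0 < i := by
      intro i hi
      rw [List.mem_map] at hi
      obtain ⟨x, hx, rfl⟩ := hi
      exact hpos x hx
    set β : Composition n := ⟨l.map Sigma.fst, fun hi => hblkpos _ hi, hsum⟩ with hβ
    have hlen : β.length = l.length := by
      simp [hβ, Composition.length]
    have hpf : ∀ i : Fin β.length, (l.get (Fin.cast hlen i)).fst = β.blocksFun i := by
      intro i
      simp [hβ, Composition.blocksFun, List.getElem_map]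
    refine ⟨⟨β, fun i => Fin.cast (congrArg a (hpf i)) (l.get (Fin.cast hlen i)).snd⟩, ?_⟩
    apply Subtype.ext
    simp only [toWord]
    have hofn : ∀ {m : ℕ} (h : m = l.length),
        List.ofFn (fun i : Fin m => l.get (Fin.cast h i)) = l := by
      intro m h; subst h; exact List.ofFn_get l
    have hfun : (fun i : Fin β.length =>
        (⟨β.blocksFun i, Fin.cast (congrArg a (hpf i)) (l.get (Fin.cast hlen i)).snd⟩ : Ltr a))
        = fun i => l.get (Fin.cast hlen i) := by
      funext i
      exact ((sigma_cast_eq a (hpf i) _).trans (Sigma.eta _))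
    exact (congrArg List.ofFn hfun).trans (hofn hlen)

noncomputable instance {n : ℕ} : Fintype (Word a n) :=
  Fintype.ofBijective (toWord a) (toWord_bijective a)

end Words

section Counting

variable (a : ℕ → ℕ)

lemma cast_prod_blocks {n : ℕ} (β : Composition n) :
    ((β.blocks.map a).prod : ℚ) = (β.blocks.map (fun k => (a k : ℚ))).prod := by
  rw [Nat.cast_list_prod, List.map_map]
  rfl

lemma length_toWord {n : ℕ} (x : CC a n) : (toWord a x).1.length = x.1.length := by
  simp [toWord]

lemma prod_blocksFun {n : ℕ} (β : Composition n) :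
    ∏ i, a (β.blocksFun i) = (β.blocks.map a).prod := by
  rw [← β.ofFn_blocksFun, List.map_ofFn, ← List.prod_ofFn]
  rfl

lemma sum_word_length {n : ℕ} (G : ℕ → ℚ) :
    ∑ w : Word a n, G w.1.length
      = ∑ β : Composition n, ((β.blocks.map a).prod : ℚ) * G β.length := by
  rw [← Fintype.sum_bijective (toWord a) (toWord_bijective a)
    (fun x : CC a n => G ((toWord a x).1.length)) _ (fun x => rfl)]
  have h1 : ∀ x : CC a n, G ((toWord a x).1.length) = G x.1.length := by
    intro x; rw [length_toWord]
  rw [Fintype.sum_congr _ _ h1]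
  rw [← Finset.univ_sigma_univ, Finset.sum_sigma]
  refine Finset.sum_congr rfl fun β _ => ?_
  have h2 : ∑ s : (i : Fin β.length) → Fin (a (β.blocksFun i)),
      G ((⟨β, s⟩ : CC a n)).fst.length
      = ∑ _s : (i : Fin β.length) → Fin (a (β.blocksFun i)), G β.length := rfl
  rw [h2, Finset.sum_const]
  simp only [Finset.card_univ, Fintype.card_pi, Fintype.card_fin, nsmul_eq_mul]
  rw [prod_blocksFun]

end Counting

section Necklace

variable (a : ℕ → ℕ)

lemma wsum_perm {w w' : List (Ltr a)} (h : w ~ w') : wsum a w = wsum a w' :=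
  (h.map Sigma.fst).sum_eq

def rotWord {n : ℕ} (w : Word a n) (t : ℕ) : Word a n :=
  ⟨w.1.rotate t, by
    constructor
    · rw [wsum_perm a (List.rotate_perm w.1 t)]; exact w.2.1
    · intro x hx; exact w.2.2 x (List.mem_rotate.1 hx)⟩

instance rotSetoid (n : ℕ) : Setoid (Word a n) :=
  ⟨fun w w' => w.1 ~r w'.1,
   ⟨fun w => IsRotated.refl w.1, fun h => h.symm, fun h h' => h.trans h'⟩⟩

instance (n : ℕ) : DecidableRel ((· ≈ ·) : Word a n → Word a n → Prop) :=
  fun w w' => decidable_of_iff (w.1 ~r w'.1) Iff.rfl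

abbrev Neck (n : ℕ) := Quotient (rotSetoid a n)

lemma word_ne_nil {n : ℕ} (hn : 1 ≤ n) (w : Word a n) : w.1 ≠ [] := by
  intro h
  have h2 := w.2.1
  rw [h] at h2
  simp [wsum] at h2
  omega

lemma minPer_rotate {w : List (Ltr a)} (hw : w ≠ []) (t : ℕ) :
    minPer (w.rotate t) = minPer w := by
  have hne : w.rotate t ≠ [] := fun h => hw (List.rotate_eq_nil_iff.1 h)
  have key : ∀ d, (w.rotate t).rotate d = w.rotate t ↔ w.rotate d = w := by
    intro d
    rw [List.rotate_rotate, Nat.add_comm, ← List.rotate_rotate, List.rotate_eq_rotate]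
  apply Nat.le_antisymm
  · exact minPer_min hne (minPer_pos hw) ((key _).2 (rotate_minPer hw))
  · exact minPer_min hw (minPer_pos hne) ((key _).1 (rotate_minPer hne))

lemma m_pos {w : List (Ltr a)} (hw : w ≠ []) : 0 < w.length / minPer w :=
  Nat.div_pos (minPer_le_length hw) (minPer_pos hw)

lemma take_minPer_rotate {w : List (Ltr a)} (hw : w ≠ []) (t : ℕ) :
    (w.rotate t).take (minPer (w.rotate t)) ~r w.take (minPer w) := by
  have hp := minPer_pos hw
  have hul := take_minPer_length hw
  have hm := m_pos a hw
  have ht' : t % minPer w ≤ (w.take (minPer w)).length := by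
    rw [hul]; exact le_of_lt (Nat.mod_lt _ hp)
  have h1 : w.rotate t = nrep (w.length / minPer w)
      ((w.take (minPer w)).rotate (t % minPer w)) := by
    have h0 := rotate_nrep (w.length / minPer w) (t % minPer w) (w.take (minPer w)) ht'
    rw [← root_spec hw] at h0
    rw [rotate_mod_minPer hw t]
    exact h0
  rw [minPer_rotate a hw t]
  have hlen2 : ((w.take (minPer w)).rotate (t % minPer w)).length = minPer w := by
    rw [List.length_rotate, hul]
  have h2 : (w.rotate t).take (minPer w)
      = (w.take (minPer w)).rotate (t % minPer w) := by
    rw [h1]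
    obtain ⟨m, hm'⟩ : ∃ m, w.length / minPer w = m + 1 :=
      ⟨w.length / minPer w - 1, by omega⟩
    rw [hm', nrep_succ, List.take_append_of_le_length (le_of_eq hlen2.symm)]
    exact List.take_of_length_le (le_of_eq hlen2)
  rw [h2]
  exact List.IsRotated.forall _ _

/-- weight of the aperiodic root -/
def rootwt {n : ℕ} (w : Word a n) : ℕ := wsum a (w.1.take (minPer w.1))

lemma wsum_nrep (m : ℕ) (u : List (Ltr a)) : wsum a (nrep m u) = m * wsum a u := by
  rw [wsum, map_nrep, sum_nrep]; rfl

lemma wsum_root_spec {n : ℕ} (hn : 1 ≤ n) (w : Word a n) :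
    n = (w.1.length / minPer w.1) * rootwt a w := by
  have hw := word_ne_nil a hn w
  conv_lhs => rw [← w.2.1, root_spec hw]
  rw [wsum_nrep]
  rfl

lemma rootwt_dvd {n : ℕ} (hn : 1 ≤ n) (w : Word a n) : rootwt a w ∣ n :=
  ⟨w.1.length / minPer w.1, (wsum_root_spec a hn w).trans (Nat.mul_comm _ _)⟩

lemma rootwt_pos {n : ℕ} (hn : 1 ≤ n) (w : Word a n) : 0 < rootwt a w := by
  have := wsum_root_spec a hn w
  rcases Nat.eq_zero_or_pos (rootwt a w) with h | h
  · rw [h, Nat.mul_zero] at this; omega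
  · exact h

/-- the fundamental fraction identity -/
lemma per_mul {n : ℕ} (hn : 1 ≤ n) (w : Word a n) :
    n * minPer w.1 = w.1.length * rootwt a w := by
  have hw := word_ne_nil a hn w
  have h1 := wsum_root_spec a hn w
  have h2 : w.1.length = (w.1.length / minPer w.1) * minPer w.1 :=
    (Nat.div_mul_cancel (minPer_dvd_length hw)).symm
  calc n * minPer w.1 = ((w.1.length / minPer w.1) * rootwt a w) * minPer w.1 := by
        rw [← h1]
    _ = ((w.1.length / minPer w.1) * minPer w.1) * rootwt a w := by ring
    _ = w.1.length * rootwt a w := by rw [← h2]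

end Necklace

end Stmt11Aux

namespace Stmt11Aux

section Fiber

variable (a : ℕ → ℕ) {n : ℕ}

lemma minPer_congr {w w' : List (Ltr a)} (hw : w ≠ []) (h : w ~r w') :
    minPer w = minPer w' := by
  obtain ⟨t, rfl⟩ := h
  exact (minPer_rotate a hw t).symm

lemma rootwt_congr (hn : 1 ≤ n) {w w' : Word a n} (h : w.1 ~r w'.1) :
    rootwt a w = rootwt a w' := by
  obtain ⟨t, ht⟩ := h
  have hw := word_ne_nil a hn w
  have h2 := take_minPer_rotate a hw t
  rw [ht] at h2
  exact (wsum_perm a h2.perm).symm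

lemma card_fiber (hn : 1 ≤ n) (w : Word a n) :
    (Finset.univ.filter (fun w' : Word a n => (⟦w'⟧ : Neck a n) = ⟦w⟧)).card
      = minPer w.1 := by
  rw [← Fintype.card_subtype]
  have hw := word_ne_nil a hn w
  have hp := minPer_pos hw
  have hbij : Function.Bijective (fun i : Fin (minPer w.1) =>
      (⟨rotWord a w i, Quotient.sound (List.IsRotated.forall w.1 i)⟩ :
        {w' : Word a n // (⟦w'⟧ : Neck a n) = ⟦w⟧})) := by
    constructor
    · intro i j hij
      have hval : w.1.rotate i = w.1.rotate j :=
        congrArg (fun z => z.1.1) hij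
      apply Fin.ext
      rcases le_total (i : ℕ) (j : ℕ) with hle | hle
      · have := (rotate_eq_rotate_iff hw hle).1 hval
        rcases Nat.eq_zero_or_pos ((j : ℕ) - i) with h0 | h0
        · omega
        · have := Nat.le_of_dvd h0 this
          have hj := j.2
          omega
      · have := (rotate_eq_rotate_iff hw hle).1 hval.symm
        rcases Nat.eq_zero_or_pos ((i : ℕ) - j) with h0 | h0
        · omega
        · have := Nat.le_of_dvd h0 this
          have hi := i.2
          omega
    · rintro ⟨w', hq⟩
      obtain ⟨t, ht⟩ : w.1 ~r w'.1 := (Quotient.exact hq).symm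
      refine ⟨⟨t % minPer w.1, Nat.mod_lt _ hp⟩, ?_⟩
      apply Subtype.ext
      apply Subtype.ext
      show w.1.rotate (t % minPer w.1) = w'.1
      rw [← rotate_mod_minPer hw t]
      exact ht
  rw [← Fintype.card_of_bijective hbij, Fintype.card_fin]

lemma sum_classes (hn : 1 ≤ n) (F : Word a n → ℚ)
    (hinv : ∀ w w' : Word a n, w.1 ~r w'.1 → F w = F w') :
    ∑ w : Word a n, F w
      = ∑ ν : Neck a n, (minPer (ν.out.1) : ℚ) * F ν.out := by
  rw [← Finset.sum_fiberwise_of_maps_to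
    (g := fun w : Word a n => (⟦w⟧ : Neck a n)) (fun w _ => Finset.mem_univ _) F]
  refine Finset.sum_congr rfl fun ν _ => ?_
  have hconst : ∀ w' ∈ Finset.univ.filter
      (fun w' : Word a n => (⟦w'⟧ : Neck a n) = ν), F w' = F ν.out := by
    intro w' hw'
    rw [Finset.mem_filter] at hw'
    apply hinv
    have : (⟦w'⟧ : Neck a n) = ⟦ν.out⟧ := by rw [hw'.2, Quotient.out_eq]
    exact Quotient.exact this
  rw [Finset.sum_congr rfl hconst, Finset.sum_const]
  have hcard : (Finset.univ.filter
      (fun w' : Word a n => (⟦w'⟧ : Neck a n) = ν)).card = minPer ν.out.1 := by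
    have := card_fiber a hn ν.out
    rw [Quotient.out_eq] at this
    exact this
  rw [hcard]
  simp [mul_comm]

end Fiber

end Stmt11Aux

namespace Stmt11Aux

section Bij

variable (a : ℕ → ℕ) {n : ℕ}

/-- number of aperiodic necklaces of weight `e` -/
noncomputable def Lcard (e : ℕ) : ℕ :=
  Fintype.card {ν : Neck a e // minPer ν.out.1 = ν.out.1.length}

def rootW {n : ℕ} (w : Word a n) {e : ℕ} (h : rootwt a w = e) : Word a e :=
  ⟨w.1.take (minPer w.1), h, fun x hx => w.2.2 x (List.take_subset _ _ hx)⟩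

lemma rootW_val {n : ℕ} (w : Word a n) {e : ℕ} (h : rootwt a w = e) :
    (rootW a w h).1 = w.1.take (minPer w.1) := rfl

lemma aper_mk {e : ℕ} (he : 1 ≤ e) (u : Word a e) :
    (minPer ((⟦u⟧ : Neck a e).out.1) = (⟦u⟧ : Neck a e).out.1.length)
      ↔ (minPer u.1 = u.1.length) := by
  have hrel : ((⟦u⟧ : Neck a e).out).1 ~r u.1 := Quotient.mk_out u
  have hlen : ((⟦u⟧ : Neck a e).out).1.length = u.1.length := hrel.perm.length_eq
  have hper : minPer ((⟦u⟧ : Neck a e).out).1 = minPer u.1 :=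
    minPer_congr a (word_ne_nil a he _) hrel
  rw [hlen, hper]

lemma card_root_fiber (hn : 1 ≤ n) {e : ℕ} (he : e ∣ n) (hepos : 1 ≤ e) :
    (Finset.univ.filter (fun ν : Neck a n => rootwt a ν.out = e)).card
      = Lcard a e := by
  rw [← Fintype.card_subtype, Lcard]
  have hF : ∀ (ν : Neck a n) (h : rootwt a ν.out = e),
      minPer (rootW a ν.out h).1 = (rootW a ν.out h).1.length := by
    intro ν h
    have hw : ν.out.1 ≠ [] := word_ne_nil a hn ν.out
    show minPer (ν.out.1.take (minPer ν.out.1)) = (ν.out.1.take (minPer ν.out.1)).length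
    rw [minPer_take_minPer hw, take_minPer_length hw]
  apply Fintype.card_of_bijective (f := fun x : {ν : Neck a n // rootwt a ν.out = e} =>
    (⟨⟦rootW a x.1.out x.2⟧, (aper_mk a hepos _).2 (hF x.1 x.2)⟩ :
      {ν : Neck a e // minPer ν.out.1 = ν.out.1.length}))
  constructor
  · rintro ⟨ν, h⟩ ⟨ν', h'⟩ heq
    have hq : (⟦rootW a ν.out h⟧ : Neck a e) = ⟦rootW a ν'.out h'⟧ :=
      congrArg Subtype.val heq
    have hur : (rootW a ν.out h).1 ~r (rootW a ν'.out h').1 := Quotient.exact hq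
    -- roots
    have hwne : ν.out.1 ≠ [] := word_ne_nil a hn ν.out
    have hwne' : ν'.out.1 ≠ [] := word_ne_nil a hn ν'.out
    have hune : (rootW a ν.out h).1 ≠ [] := word_ne_nil a hepos _
    have hulen : 0 < (rootW a ν.out h).1.length := List.length_pos_iff.2 hune
    have hm : n = (ν.out.1.length / minPer ν.out.1) * e := by
      have := wsum_root_spec a hn ν.out; rw [h] at this; exact this
    have hm' : n = (ν'.out.1.length / minPer ν'.out.1) * e := by
      have := wsum_root_spec a hn ν'.out; rw [h'] at this; exact this
    have hmm : ν.out.1.length / minPer ν.out.1 = ν'.out.1.length / minPer ν'.out.1 :=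
      Nat.eq_of_mul_eq_mul_right hepos (by omega)
    obtain ⟨t, ht⟩ := hur
    rw [rootW_val, rootW_val] at ht
    rw [rootW_val] at hulen
    have hrot : ν'.out.1
        = ν.out.1.rotate (t % (ν.out.1.take (minPer ν.out.1)).length) := by
      have h1 := root_spec hwne'
      have h2 := root_spec hwne
      calc ν'.out.1 = nrep (ν'.out.1.length / minPer ν'.out.1)
            (ν'.out.1.take (minPer ν'.out.1)) := h1
        _ = nrep (ν.out.1.length / minPer ν.out.1)
            ((ν.out.1.take (minPer ν.out.1)).rotate t) := by rw [hmm, ht]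
        _ = nrep (ν.out.1.length / minPer ν.out.1)
            ((ν.out.1.take (minPer ν.out.1)).rotate
              (t % (ν.out.1.take (minPer ν.out.1)).length)) := by
              rw [List.rotate_mod]
        _ = (nrep (ν.out.1.length / minPer ν.out.1)
            (ν.out.1.take (minPer ν.out.1))).rotate
              (t % (ν.out.1.take (minPer ν.out.1)).length) := by
              rw [rotate_nrep _ _ _ (le_of_lt (Nat.mod_lt _ hulen))]
        _ = ν.out.1.rotate (t % (ν.out.1.take (minPer ν.out.1)).length) := by
              rw [← h2]
    have : ν = ν' := by
      rw [← Quotient.out_eq ν, ← Quotient.out_eq ν']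
      apply Quotient.sound
      show ν.out.1 ~r ν'.out.1
      rw [hrot]
      exact (List.IsRotated.forall _ _).symm
    exact Subtype.ext this
  · rintro ⟨ν', hap⟩
    have hepos' := hepos
    have hune : ν'.out.1 ≠ [] := word_ne_nil a hepos ν'.out
    have hulen : 0 < ν'.out.1.length := List.length_pos_iff.2 hune
    obtain ⟨m, hme⟩ := he
    have hm : 0 < m := by
      rcases Nat.eq_zero_or_pos m with h0 | h0
      · rw [h0, Nat.mul_zero] at hme; omega
      · exact h0
    have hW : WordOk a n (nrep m ν'.out.1) := by
      constructor
      · rw [show wsum a (nrep m ν'.out.1) = m * wsum a ν'.out.1 from wsum_nrep a m _,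
          ν'.out.2.1, hme, Nat.mul_comm]
      · intro x hx; exact ν'.out.2.2 x (mem_nrep hx)
    set W : Word a n := ⟨nrep m ν'.out.1, hW⟩ with hWdef
    have hWper : minPer W.1 = ν'.out.1.length := minPer_nrep hm hune hap
    have hWroot : W.1.take (minPer W.1) = ν'.out.1 := by
      rw [hWper, hWdef]
      show (nrep m ν'.out.1).take ν'.out.1.length = ν'.out.1
      obtain ⟨m', rfl⟩ : ∃ m', m = m' + 1 := ⟨m - 1, by omega⟩
      rw [nrep_succ, List.take_append_of_le_length le_rfl, List.take_length]
    have hWwt : rootwt a W = e := by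
      show wsum a (W.1.take (minPer W.1)) = e
      rw [hWroot, ν'.out.2.1]
    have houtW : (⟦W⟧ : Neck a n).out.1 ~r W.1 := Quotient.mk_out W
    have hWne : W.1 ≠ [] := word_ne_nil a hn W
    have hwt_out : rootwt a (⟦W⟧ : Neck a n).out = e := by
      rw [rootwt_congr a hn houtW, hWwt]
    refine ⟨⟨⟦W⟧, hwt_out⟩, ?_⟩
    apply Subtype.ext
    show (⟦rootW a (⟦W⟧ : Neck a n).out hwt_out⟧ : Neck a e) = ν'
    rw [← Quotient.out_eq ν']
    apply Quotient.sound
    show ((⟦W⟧ : Neck a n).out.1.take (minPer (⟦W⟧ : Neck a n).out.1)) ~r ν'.out.1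
    obtain ⟨t, ht⟩ := houtW.symm
    have h3 := take_minPer_rotate a hWne t
    rw [ht] at h3
    rw [hWroot] at h3
    exact h3

end Bij

end Stmt11Aux

namespace Stmt11Aux

section Main

variable (a : ℕ → ℕ)

/-- `Σ_{β ⊨ n} a_β / ℓ(β)` -/
noncomputable def Cq (n : ℕ) : ℚ :=
  ∑ β : Composition n, (β.blocks.map (fun k => (a k : ℚ))).prod / (β.length : ℚ)

lemma sum_inv_len (n : ℕ) :
    ∑ w : Word a n, (1 / (w.1.length : ℚ)) = Cq a n := by
  rw [Cq, sum_word_length a (fun k => 1 / (k : ℚ))]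
  refine Finset.sum_congr rfl fun β _ => ?_
  rw [cast_prod_blocks, mul_one_div]

lemma card_word_eq (n : ℕ) :
    (Fintype.card (Word a n) : ℚ)
      = ∑ β : Composition n, (β.blocks.map (fun k => (a k : ℚ))).prod := by
  have h := sum_word_length a (fun _ => (1 : ℚ)) (n := n)
  simp only [Finset.sum_const, Finset.card_univ, nsmul_eq_mul, mul_one] at h
  rw [h]
  exact Finset.sum_congr rfl fun β _ => (cast_prod_blocks a β)

lemma main_identity {n : ℕ} (hn : 1 ≤ n) :
    (n : ℚ) * Cq a n = ∑ e ∈ n.divisors, (e : ℚ) * (Lcard a e : ℚ) := by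
  rw [← sum_inv_len, Finset.mul_sum]
  have h1 : ∀ w : Word a n, (n : ℚ) * (1 / (w.1.length : ℚ))
      = (n : ℚ) / (w.1.length : ℚ) := fun w => by ring
  rw [Fintype.sum_congr _ _ h1]
  rw [sum_classes a hn (fun w => (n : ℚ) / (w.1.length : ℚ))
    (fun w w' hr => by show (n : ℚ) / (w.1.length : ℚ) = (n : ℚ) / (w'.1.length : ℚ); rw [hr.perm.length_eq])]
  have h2 : ∀ ν : Neck a n, (minPer ν.out.1 : ℚ) * ((n : ℚ) / (ν.out.1.length : ℚ))
      = (rootwt a ν.out : ℚ) := by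
    intro ν
    have hw := word_ne_nil a hn ν.out
    have hlpos : 0 < ν.out.1.length := List.length_pos_iff.2 hw
    have hkey := per_mul a hn ν.out
    have hq : ((n : ℚ)) * (minPer ν.out.1 : ℚ)
        = (ν.out.1.length : ℚ) * (rootwt a ν.out : ℚ) := by
      exact_mod_cast congrArg (fun k : ℕ => (k : ℚ)) hkey
    have hl0 : (ν.out.1.length : ℚ) ≠ 0 := by positivity
    field_simp
    linarith [hq]
  rw [Fintype.sum_congr _ _ h2]
  have hmap : ∀ ν : Neck a n, ν ∈ Finset.univ →
      rootwt a ν.out ∈ n.divisors := by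
    intro ν _
    rw [Nat.mem_divisors]
    exact ⟨rootwt_dvd a hn ν.out, by omega⟩
  rw [← Finset.sum_fiberwise_of_maps_to hmap (fun ν => (rootwt a ν.out : ℚ))]
  refine Finset.sum_congr rfl fun e hedvd => ?_
  rw [Nat.mem_divisors] at hedvd
  have hepos : 1 ≤ e := by
    rcases Nat.eq_zero_or_pos e with h0 | h0
    · exfalso; rw [h0] at hedvd; have := Nat.eq_zero_of_zero_dvd hedvd.1; omega
    · exact h0
  have hcongr : ∀ ν ∈ Finset.univ.filter (fun ν : Neck a n => rootwt a ν.out = e),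
      (rootwt a ν.out : ℚ) = (e : ℚ) := by
    intro ν hν
    rw [Finset.mem_filter] at hν
    rw [hν.2]
  rw [Finset.sum_congr rfl hcongr, Finset.sum_const,
    card_root_fiber a hn hedvd.1 hepos, nsmul_eq_mul, mul_comm]

end Main

end Stmt11Aux

namespace Stmt11Aux

section Finale

variable (a : ℕ → ℕ)

open ArithmeticFunction

lemma moebius_inverted {n : ℕ} (hn : 1 ≤ n) :
    (n : ℚ) * (Lcard a n : ℚ)
      = ∑ d ∈ n.divisors, ((moebius (n / d) : ℤ) : ℚ) * ((d : ℚ) * Cq a d) := by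
  have key := (ArithmeticFunction.sum_eq_iff_sum_smul_moebius_eq
    (R := ℚ) (f := fun e => (e : ℚ) * (Lcard a e : ℚ))
    (g := fun m => (m : ℚ) * Cq a m)).1
    (fun m hm => (main_identity a hm).symm) n (by omega)
  rw [← key]
  rw [Nat.sum_divisorsAntidiagonal' (f := fun x y => (moebius x : ℤ) • ((y : ℚ) * Cq a y))]
  refine Finset.sum_congr rfl fun d hd => ?_
  rw [zsmul_eq_mul]

lemma single_word {n : ℕ} (hn : 1 ≤ n) (c : Fin (a n)) : WordOk a n [⟨n, c⟩] := by
  constructor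
  · simp [wsum]
  · intro x hx
    simp only [List.mem_singleton] at hx
    subst hx
    exact hn

lemma a_le_Lcard {n : ℕ} (hn : 1 ≤ n) : a n ≤ Lcard a n := by
  rw [← Fintype.card_fin (a n), Lcard]
  have haper : ∀ c : Fin (a n),
      minPer ((⟨[⟨n, c⟩], single_word a hn c⟩ : Word a n) : Word a n).1
        = ((⟨[⟨n, c⟩], single_word a hn c⟩ : Word a n)).1.length := by
    intro c
    have hne : ([(⟨n, c⟩ : Ltr a)]) ≠ [] := by simp
    have h1 : minPer ([(⟨n, c⟩ : Ltr a)]) ≤ 1 := minPer_le_length hne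
    have h2 : 0 < minPer ([(⟨n, c⟩ : Ltr a)]) := minPer_pos hne
    show minPer ([(⟨n, c⟩ : Ltr a)]) = ([(⟨n, c⟩ : Ltr a)]).length
    simp only [List.length_singleton]
    omega
  apply Fintype.card_le_of_injective (fun c =>
    ⟨⟦⟨[⟨n, c⟩], single_word a hn c⟩⟧, (aper_mk a hn _).2 (haper c)⟩)
  intro c c' heq
  have hq : (⟦(⟨[⟨n, c⟩], single_word a hn c⟩ : Word a n)⟧ : Neck a n)
      = ⟦⟨[⟨n, c'⟩], single_word a hn c'⟩⟧ := congrArg Subtype.val heq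
  have hr : ([(⟨n, c⟩ : Ltr a)]) ~r ([(⟨n, c'⟩ : Ltr a)]) := Quotient.exact hq
  have hl : ([(⟨n, c⟩ : Ltr a)]) = ([(⟨n, c'⟩ : Ltr a)]) :=
    List.isRotated_singleton_iff.1 hr
  have := List.head_eq_of_cons_eq hl
  injection this with h1 h2

lemma Lcard_le_card {n : ℕ} : Lcard a n ≤ Fintype.card (Word a n) := by
  calc Lcard a n ≤ Fintype.card (Neck a n) := Fintype.card_subtype_le _
    _ ≤ Fintype.card (Word a n) :=
        Fintype.card_le_of_surjective (fun w => ⟦w⟧)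
          (fun ν => ⟨ν.out, Quotient.out_eq ν⟩)

end Finale

end Stmt11Aux




/-- For a sequence of natural numbers `a`, with
`h n = Σ_{β ⊨ n} a_β` and `p n = (1/n) Σ_{d | n} d μ(n/d) Σ_{β ⊨ d} a_β / ℓ(β)`,
one has `h n ≥ p n ≥ a n ≥ 0` for every `n ≥ 1` (as rational numbers). -/
theorem stmt_11 (a : ℕ → ℕ)
    (h : ℕ → ℚ) (p : ℕ → ℚ)
    (hdef : ∀ n : ℕ, 1 ≤ n →
      h n = ∑ β : Composition n, (β.blocks.map (fun k => (a k : ℚ))).prod)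
    (pdef : ∀ n : ℕ, 1 ≤ n →
      p n = (1 / (n : ℚ)) *
        ∑ d ∈ n.divisors, (d : ℚ) * ((ArithmeticFunction.moebius (n / d) : ℤ) : ℚ) *
          ∑ β : Composition d,
            (β.blocks.map (fun k => (a k : ℚ))).prod / (β.length : ℚ)) :
    ∀ n : ℕ, 1 ≤ n → h n ≥ p n ∧ p n ≥ (a n : ℚ) ∧ (a n : ℚ) ≥ 0 := by
  intro n hn
  have hn0 : (n : ℚ) ≠ 0 := by positivity
  -- p n = Lcard a n
  have hp : p n = (Stmt11Aux.Lcard a n : ℚ) := by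
    rw [pdef n hn]
    have hsum : ∑ d ∈ n.divisors, (d : ℚ) * ((ArithmeticFunction.moebius (n / d) : ℤ) : ℚ) *
          ∑ β : Composition d,
            (β.blocks.map (fun k => (a k : ℚ))).prod / (β.length : ℚ)
        = (n : ℚ) * (Stmt11Aux.Lcard a n : ℚ) := by
      rw [Stmt11Aux.moebius_inverted a hn]
      refine Finset.sum_congr rfl fun d _ => ?_
      rw [Stmt11Aux.Cq]
      ring
    rw [hsum]
    field_simp
  have hh : h n = (Fintype.card (Stmt11Aux.Word a n) : ℚ) := by
    rw [hdef n hn, Stmt11Aux.card_word_eq]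
  refine ⟨?_, ?_, by positivity⟩
  · rw [hp, hh]
    exact_mod_cast Stmt11Aux.Lcard_le_card a
  · rw [hp]
    exact_mod_cast Stmt11Aux.a_le_Lcard a hn
end

section
/- For a sequence (c_n)_{n≥1} of rational numbers and n ≥ 1, write W(c)_n = (1/n) · Σ_{d | n} d · μ(n/d) · Σ_{β ⊨ d} c_β / ℓ(β), where the inner sum runs over all compositions β of d. Let (b_n)_{n≥1} be any sequence of rational numbers, fix n ≥ 1, and let (b'_m)_{m≥1} be its truncation defined by b'_m = b_m for m < n and b'_m = 0 for m ≥ n. Then W(b')_n = W(b)_n − b_n. -/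
/-- The transform `W(c)_n = (1/n) Σ_{d | n} d μ(n/d) Σ_{β ⊨ d} c_β / ℓ(β)`. -/
noncomputable def wittTransform (c : ℕ → ℚ) (n : ℕ) : ℚ :=
  (1 / (n : ℚ)) *
    ∑ d ∈ n.divisors, (d : ℚ) * ((ArithmeticFunction.moebius (n / d) : ℤ) : ℚ) *
      ∑ β : Composition d, (β.blocks.map c).prod / (β.length : ℚ)

lemma block_lt_of_ne_single {n : ℕ} (hn : 0 < n) (β : Composition n)
    (hβ : β ≠ Composition.single n hn) : ∀ a ∈ β.blocks, a < n := by
  intro a ha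
  have hlen : β.length ≠ 1 := by
    intro h
    exact hβ ((Composition.eq_single_iff_length hn).2 h)
  have hlen1 : 0 < β.length := β.length_pos_of_pos hn
  obtain ⟨l1, l2, hl⟩ := List.append_of_mem ha
  have hall : ∀ x ∈ l1 ++ a :: l2, 0 < x := fun x hx => β.blocks_pos (hl ▸ hx)
  have hsum : l1.sum + (a + l2.sum) = n := by
    have := β.blocks_sum
    rw [hl] at this
    simpa [List.sum_append] using this
  have hlen' : β.length = l1.length + l2.length + 1 := by
    have h := congrArg List.length hl
    simp only [List.length_append, List.length_cons] at h
    rw [Composition.length, h]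
    omega
  have hne : l1 ++ l2 ≠ [] := by
    intro h
    have := congrArg List.length h
    simp only [List.length_append, List.length_nil] at this
    omega
  have hpos : 0 < (l1 ++ l2).sum := by
    refine List.sum_pos _ (fun x hx => hall x ?_) hne
    simp only [List.mem_append, List.mem_cons] at hx ⊢
    tauto
  rw [List.sum_append] at hpos
  omega

/-- If `b'` is the truncation of `b` given by `b' m = b m` for `m < n` and
`b' m = 0` for `m ≥ n`, then `W(b')_n = W(b)_n − b_n`. -/
theorem stmt_12 (b : ℕ → ℚ) (n : ℕ) (hn : 1 ≤ n) (b' : ℕ → ℚ)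
    (hb' : ∀ m : ℕ, (m < n → b' m = b m) ∧ (n ≤ m → b' m = 0)) :
    wittTransform b' n = wittTransform b n - b n := by
  have hn0 : 0 < n := hn
  have hnQ : (n : ℚ) ≠ 0 := by positivity
  -- inner sums agree for d < n
  have hinner : ∀ d ∈ n.divisors, d ≠ n →
      (∑ β : Composition d, (β.blocks.map b').prod / (β.length : ℚ)) =
      ∑ β : Composition d, (β.blocks.map b).prod / (β.length : ℚ) := by
    intro d hd hdn
    have hdlt : d < n := lt_of_le_of_ne (Nat.le_of_dvd hn0 (Nat.mem_divisors.1 hd).1) hdn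
    refine Finset.sum_congr rfl fun β _ => ?_
    congr 1
    congr 1
    refine List.map_congr_left fun a ha => ?_
    have : a ≤ d := by
      have := β.blocks_sum
      exact this ▸ List.single_le_sum (fun x _ => Nat.zero_le x) a ha
    exact (hb' a).1 (lt_of_le_of_lt this hdlt)
  -- inner sum at n
  have hinner_n :
      (∑ β : Composition n, (β.blocks.map b').prod / (β.length : ℚ)) =
      (∑ β : Composition n, (β.blocks.map b).prod / (β.length : ℚ)) - b n := by
    have key : (∑ β : Composition n,
        ((β.blocks.map b').prod / (β.length : ℚ) - (β.blocks.map b).prod / (β.length : ℚ)))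
        = - b n := by
      rw [Fintype.sum_eq_single (Composition.single n hn0)]
      · simp [Composition.single_blocks, Composition.single_length, (hb' n).2 le_rfl]
      · intro β hβ
        have : (β.blocks.map b').prod = (β.blocks.map b).prod := by
          congr 1
          exact List.map_congr_left fun a ha =>
            (hb' a).1 (block_lt_of_ne_single hn0 β hβ a ha)
        rw [this]; ring
    rw [Finset.sum_sub_distrib] at key
    linarith [key]
  unfold wittTransform
  have hsplit : ∀ c : ℕ → ℚ, ∑ d ∈ n.divisors,
      (d : ℚ) * ((ArithmeticFunction.moebius (n / d) : ℤ) : ℚ) *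
        ∑ β : Composition d, (β.blocks.map c).prod / (β.length : ℚ) =
      (∑ d ∈ n.divisors.erase n, (d : ℚ) * ((ArithmeticFunction.moebius (n / d) : ℤ) : ℚ) *
        ∑ β : Composition d, (β.blocks.map c).prod / (β.length : ℚ)) +
      (n : ℚ) * ((ArithmeticFunction.moebius (n / n) : ℤ) : ℚ) *
        ∑ β : Composition n, (β.blocks.map c).prod / (β.length : ℚ) := by
    intro c
    rw [← Finset.sum_erase_add _ _ (Nat.mem_divisors_self n (by omega))]
  rw [hsplit b', hsplit b]
  have herase : ∑ d ∈ n.divisors.erase n,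
      (d : ℚ) * ((ArithmeticFunction.moebius (n / d) : ℤ) : ℚ) *
        ∑ β : Composition d, (β.blocks.map b').prod / (β.length : ℚ) =
      ∑ d ∈ n.divisors.erase n, (d : ℚ) * ((ArithmeticFunction.moebius (n / d) : ℤ) : ℚ) *
        ∑ β : Composition d, (β.blocks.map b).prod / (β.length : ℚ) := by
    refine Finset.sum_congr rfl fun d hd => ?_
    rw [hinner d (Finset.mem_of_mem_erase hd) (Finset.ne_of_mem_erase hd)]
  rw [herase, hinner_n]
  have hmu : ((ArithmeticFunction.moebius (n / n) : ℤ) : ℚ) = 1 := by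
    rw [Nat.div_self hn0]; simp
  rw [hmu]
  field_simp
  ring
end
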